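/- arXiv:2511.00169 — 9 statements merged into one kernel-verified Lean document; each statement's English description precedes it below -/
import Mathlib

section
/- The symmetric group on n letters (n ≥ 2) contains exactly 2^{n-2} distinct Coxeter elements, i.e. elements expressible as a product of the simple transpositions s_1, ..., s_{n-1} in which each s_i appears exactly once. -/
/-!
Write `C m` for the set of Coxeter elements in the generators `s_1, …, s_m`. In a word for an
element of `C (m + 1)`, the letter `s_{m+1}` commutes with every letter except `s_m`, so it can be
moved to the front if `s_m` comes after it and to the back otherwise. Hence
`C (m + 1) = s_{m+1} C m ∪ C m s_{m+1}`. For `m ≥ 1` the union is disjoint: evaluated at `m + 2`,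
which `C m` fixes, the left-hand elements give `m + 1`, while the right-hand ones give
`w (m + 1) ≤ m`. So `#C (m + 1) = 2 #C m`, and `#C 1 = 1`.
-/

open Equiv
open List hiding swap

noncomputable def adjSwapProd (l : List ℕ) : Perm ℕ :=
  (l.map fun i => swap i (i + 1)).prod

def coxeterElements (m : ℕ) : Set (Perm ℕ) :=
  {w | ∃ l : List ℕ, l.Perm (range' 1 m) ∧ w = adjSwapProd l}

@[simp]
lemma adjSwapProd_nil : adjSwapProd [] = 1 := rfl

@[simp]
lemma adjSwapProd_cons (i : ℕ) (l : List ℕ) :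
    adjSwapProd (i :: l) = swap i (i + 1) * adjSwapProd l := by
  simp [adjSwapProd]

@[simp]
lemma adjSwapProd_append (a b : List ℕ) : adjSwapProd (a ++ b) = adjSwapProd a * adjSwapProd b := by
  simp [adjSwapProd]

lemma adjSwapProd_apply_of_forall_lt {l : List ℕ} {x : ℕ} (h : ∀ i ∈ l, i + 1 < x) :
    adjSwapProd l x = x := by
  induction l with
  | nil => rfl
  | cons i l ih =>
    have hi := h i mem_cons_self
    rw [adjSwapProd_cons, Perm.mul_apply, ih fun j hj => h j (mem_cons_of_mem _ hj),
      swap_apply_of_ne_of_ne] <;> omega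

lemma adjSwapProd_apply_le {l : List ℕ} {k x : ℕ} (h : ∀ i ∈ l, i + 1 ≤ k) (hx : x ≤ k) :
    adjSwapProd l x ≤ k := by
  induction l with
  | nil => exact hx
  | cons i l ih =>
    have hl := ih fun j hj => h j (mem_cons_of_mem _ hj)
    have hi := h i mem_cons_self
    rw [adjSwapProd_cons, Perm.mul_apply, swap_apply_def]
    split_ifs <;> omega

lemma commute_swap_succ {i j : ℕ} (h : i + 1 < j) :
    Commute (swap i (i + 1)) (swap j (j + 1)) :=
  (Perm.disjoint_swap_swap (by grind)).commute

lemma commute_adjSwapProd_swap {l : List ℕ} {j : ℕ} (h : ∀ i ∈ l, i + 1 < j) :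
    Commute (adjSwapProd l) (swap j (j + 1)) :=
  Commute.list_prod_left _ _ <| by
    simp only [mem_map, forall_exists_index, and_imp, forall_apply_eq_imp_iff₂]
    exact fun i hi => commute_swap_succ (h i hi)

lemma adjSwapProd_middle_eq_swap_mul {a b : List ℕ} {j : ℕ} (h : ∀ i ∈ a, i + 1 < j) :
    adjSwapProd (a ++ j :: b) = swap j (j + 1) * adjSwapProd (a ++ b) := by
  simp only [adjSwapProd_append, adjSwapProd_cons, ← mul_assoc,
    (commute_adjSwapProd_swap h).eq]

lemma adjSwapProd_middle_eq_mul_swap {a b : List ℕ} {j : ℕ} (h : ∀ i ∈ b, i + 1 < j) :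
    adjSwapProd (a ++ j :: b) = adjSwapProd (a ++ b) * swap j (j + 1) := by
  simp only [adjSwapProd_append, adjSwapProd_cons, mul_assoc,
    (commute_adjSwapProd_swap h).symm.eq]

lemma lt_of_mem_of_perm_range' {l : List ℕ} {m i : ℕ} (hl : l.Perm (range' 1 m)) (hi : i ∈ l) :
    i < m + 1 := by
  have := mem_range'_1.1 (hl.mem_iff.1 hi)
  omega

lemma range'_one_add_one (m : ℕ) : range' 1 (m + 1) = range' 1 m ++ [m + 1] := by
  rw [range'_1_concat, Nat.add_comm]

lemma exists_eq_append_cons_of_perm_range'_succ {l : List ℕ} {m : ℕ}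
    (hl : l.Perm (range' 1 (m + 1))) :
    ∃ a b, l = a ++ (m + 1) :: b ∧ (a ++ b).Perm (range' 1 m) := by
  have hmem : m + 1 ∈ l := hl.mem_iff.2 (mem_range'_1.2 (by omega))
  obtain ⟨a, b, rfl⟩ := append_of_mem hmem
  refine ⟨a, b, rfl, (perm_middle.symm.trans hl).trans ?_ |>.cons_inv⟩
  rw [range'_one_add_one]
  exact perm_append_singleton _ _

lemma coxeterElements_zero : coxeterElements 0 = {1} := by
  ext w
  simp [coxeterElements]

lemma coxeterElements_finite (m : ℕ) : (coxeterElements m).Finite :=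
  ((range' 1 m).permutations.finite_toSet.image adjSwapProd).subset <| by
    rintro _ ⟨l, hl, rfl⟩
    exact ⟨l, mem_permutations.2 hl, rfl⟩

lemma apply_add_two_of_mem_coxeterElements {m : ℕ} {w : Perm ℕ} (hw : w ∈ coxeterElements m) :
    w (m + 2) = m + 2 := by
  obtain ⟨l, hl, rfl⟩ := hw
  exact adjSwapProd_apply_of_forall_lt fun i hi => by
    have := lt_of_mem_of_perm_range' hl hi
    omega

lemma apply_add_two_le_of_mem_coxeterElements {m : ℕ} {w : Perm ℕ}
    (hw : w ∈ coxeterElements (m + 1)) : w (m + 2) ≤ m + 1 := by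
  obtain ⟨l, hl, rfl⟩ := hw
  obtain ⟨a, b, rfl, hab⟩ := exists_eq_append_cons_of_perm_range'_succ hl
  have hlt : ∀ i ∈ a ++ b, i + 1 < m + 2 := fun i hi => by
    have := lt_of_mem_of_perm_range' hab hi
    omega
  rw [adjSwapProd_append, adjSwapProd_cons, Perm.mul_apply, Perm.mul_apply,
    adjSwapProd_apply_of_forall_lt fun i hi => hlt i (mem_append_right a hi), swap_apply_right]
  exact adjSwapProd_apply_le (fun i hi => Nat.le_of_lt_succ (hlt i (mem_append_left b hi))) le_rfl

lemma coxeterElements_succ (m : ℕ) :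
    coxeterElements (m + 1) = (swap (m + 1) (m + 2) * ·) '' coxeterElements m ∪
      (· * swap (m + 1) (m + 2)) '' coxeterElements m := by
  ext w
  constructor
  · rintro ⟨l, hl, rfl⟩
    obtain ⟨a, b, rfl, hab⟩ := exists_eq_append_cons_of_perm_range'_succ hl
    have hlt : ∀ i ∈ a ++ b, i ≠ m → i + 1 < m + 1 := fun i hi him => by
      have := lt_of_mem_of_perm_range' hab hi
      omega
    by_cases hma : m ∈ a
    · have hmb : m ∉ b := disjoint_of_nodup_append (hab.nodup_iff.2 nodup_range') hma
      refine .inr ⟨_, ⟨a ++ b, hab, rfl⟩, (adjSwapProd_middle_eq_mul_swap fun i hi => ?_).symm⟩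
      exact hlt i (mem_append_right a hi) (ne_of_mem_of_not_mem hi hmb)
    · refine .inl ⟨_, ⟨a ++ b, hab, rfl⟩, (adjSwapProd_middle_eq_swap_mul fun i hi => ?_).symm⟩
      exact hlt i (mem_append_left b hi) (ne_of_mem_of_not_mem hi hma)
  · rintro (⟨_, ⟨l, hl, rfl⟩, rfl⟩ | ⟨_, ⟨l, hl, rfl⟩, rfl⟩)
    · exact ⟨(m + 1) :: l, by
        rw [range'_one_add_one]; exact (hl.cons _).trans (perm_append_singleton _ _).symm, by simp⟩
    · exact ⟨l ++ [m + 1], by rw [range'_one_add_one]; exact hl.append_right _, by simp⟩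

lemma disjoint_swap_mul_coxeterElements_mul_swap (m : ℕ) :
    Disjoint ((swap (m + 2) (m + 3) * ·) '' coxeterElements (m + 1))
      ((· * swap (m + 2) (m + 3)) '' coxeterElements (m + 1)) := by
  rw [Set.disjoint_left]
  rintro _ ⟨u, hu, rfl⟩ ⟨v, hv, huv⟩
  have key := congrArg (· (m + 3)) huv
  simp only [Perm.mul_apply, swap_apply_right, apply_add_two_of_mem_coxeterElements hu] at key
  have := apply_add_two_le_of_mem_coxeterElements hv
  omega

lemma ncard_coxeterElements_add_two (m : ℕ) :
    (coxeterElements (m + 2)).ncard = 2 * (coxeterElements (m + 1)).ncard := by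
  have hfin := coxeterElements_finite (m + 1)
  rw [coxeterElements_succ, Set.ncard_union_eq (disjoint_swap_mul_coxeterElements_mul_swap m)
      (hfin.image _) (hfin.image _), Set.ncard_image_of_injective _ (mul_right_injective _),
    Set.ncard_image_of_injective _ (mul_left_injective _), two_mul]

theorem ncard_coxeterElements : ∀ m : ℕ, (coxeterElements m).ncard = 2 ^ (m - 1)
  | 0 => by simp [coxeterElements_zero]
  | 1 => by simp [coxeterElements_succ, coxeterElements_zero]
  | m + 2 => by
    rw [ncard_coxeterElements_add_two, ncard_coxeterElements (m + 1)]
    simp [pow_succ, mul_comm]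

theorem card_coxeter_elements_general (n : ℕ) :
    {w : Equiv.Perm ℕ | ∃ l : List ℕ, l.Perm (List.range' 1 (n - 1)) ∧
      w = (l.map (fun i => Equiv.swap i (i + 1))).prod}.ncard = 2 ^ (n - 2) := by
  show (coxeterElements (n - 1)).ncard = _
  rw [ncard_coxeterElements, Nat.sub_sub]

/-- The symmetric group on `n` letters (realized inside `Equiv.Perm ℕ` using the
adjacent transpositions `s_1, …, s_{n-1}` with `s_i = swap i (i+1)`) contains exactly
`2^(n-2)` Coxeter elements, i.e. elements expressible as a product of the simple
transpositions each appearing exactly once. -/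
theorem card_coxeter_elements (n : ℕ) (hn : 2 ≤ n) :
    {w : Equiv.Perm ℕ | ∃ l : List ℕ, l.Perm (List.range' 1 (n - 1)) ∧
      w = (l.map (fun i => Equiv.swap i (i + 1))).prod}.ncard = 2 ^ (n - 2) :=
  card_coxeter_elements_general n
end

section
/- The set I_n defined recursively by I_1 = {s_1} and I_n = {s_1 w⁺ : w ∈ I_{n-1}} ∪ {w⁺ s_1 : w ∈ I_{n-1}}, where w⁺ denotes the result of replacing each s_j by s_{j+1} in w, is exactly the set of Coxeter elements of the symmetric group S_{n+1}, and the displayed union is disjoint. -/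
/-!
Let `sgenProducts L` be the set of products of the `s_i` over all orderings of the list `L`.
Conjugation by `x ↦ x + 1` is an automorphism sending `s_i` to `s_{i+1}`, so it maps
`sgenProducts L` onto `sgenProducts (L + 1)`. In a word using `s_i` once and otherwise only
`s_j` with `j > i`, each letter at most once, the letter `s_{i+1}` lies on at most one side of
`s_i`; everything on the other side commutes with `s_i`, so `s_i` can be moved to the front or
to the back of the word. Hence the Coxeter elements of `S_{n+2}` are `s_1 c⁺` and `c⁺ s_1` for
the Coxeter elements `c` of `S_{n+1}`, which is the recursion defining `I_n`. The union is
disjoint because `s_1 c⁺` sends `1` to `2` while `c⁺ s_1` sends `1` to `c 1 + 1 ≠ 2`.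
-/

/-- The simple transposition `s_i = swap i (i+1)` acting on `ℤ` (we use the generators
`s_1, s_2, …`). -/
def sgen (i : ℤ) : Equiv.Perm ℤ := Equiv.swap i (i + 1)

/-- The shift operation, replacing each `s_j` by `s_{j+1}` in any word: conjugation by the
translation `x ↦ x + 1`. -/
def shiftP (w : Equiv.Perm ℤ) : Equiv.Perm ℤ :=
  (Equiv.addRight (1 : ℤ)) * w * (Equiv.addRight (1 : ℤ))⁻¹

/-- The recursively defined sets `I_1 = {s_1}`,
`I_n = {s_1 w⁺ : w ∈ I_{n-1}} ∪ {w⁺ s_1 : w ∈ I_{n-1}}`. -/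
def Iset : ℕ → Set (Equiv.Perm ℤ)
  | 0 => ∅
  | 1 => {sgen 1}
  | (n + 2) => ((fun w => sgen 1 * shiftP w) '' Iset (n + 1)) ∪
      ((fun w => shiftP w * sgen 1) '' Iset (n + 1))

open Equiv

lemma sgen_apply_of_lt {i x : ℤ} (h : x < i) : sgen i x = x :=
  swap_apply_of_ne_of_ne (by omega) (by omega)

lemma sgen_apply_self (i : ℤ) : sgen i i = i + 1 :=
  swap_apply_left i (i + 1)

lemma sgen_commute {i j : ℤ} (h : i + 1 < j) : Commute (sgen i) (sgen j) :=
  (Perm.disjoint_swap_swap (by simp; omega)).commute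

lemma sgen_commute_list_prod {i : ℤ} {l : List ℤ} (h : ∀ j ∈ l, i + 1 < j) :
    Commute (sgen i) (l.map sgen).prod :=
  Commute.list_prod_right _ _ fun _ hp ↦ by
    obtain ⟨j, hj, rfl⟩ := List.mem_map.mp hp
    exact sgen_commute (h j hj)

lemma shiftP_eq_conj (w : Perm ℤ) : shiftP w = MulAut.conj (Equiv.addRight 1) w := rfl

lemma shiftP_apply (w : Perm ℤ) (x : ℤ) : shiftP w x = w (x - 1) + 1 := by
  simp [shiftP, Perm.mul_apply, sub_eq_add_neg]

lemma shiftP_sgen (i : ℤ) : shiftP (sgen i) = sgen (i + 1) := by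
  ext x
  simp only [shiftP_apply, sgen, swap_apply_def]
  split_ifs <;> omega

lemma shiftP_list_prod_sgen (l : List ℤ) :
    shiftP (l.map sgen).prod = ((l.map (· + 1)).map sgen).prod := by
  rw [shiftP_eq_conj, map_list_prod, List.map_map, List.map_map]
  exact congrArg _ (List.map_congr_left fun i _ ↦ shiftP_sgen i)

def sgenProducts (L : List ℤ) : Set (Perm ℤ) :=
  {w | ∃ l : List ℤ, l.Perm L ∧ w = (l.map sgen).prod}

lemma image_shiftP_sgenProducts (L : List ℤ) :
    shiftP '' sgenProducts L = sgenProducts (L.map (· + 1)) := by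
  ext w
  constructor
  · rintro ⟨_, ⟨l, hl, rfl⟩, rfl⟩
    exact ⟨l.map (· + 1), hl.map _, shiftP_list_prod_sgen l⟩
  · rintro ⟨l, hl, rfl⟩
    refine ⟨_, ⟨l.map (· - 1), by simpa [Function.comp_def] using hl.map fun x : ℤ ↦ x - 1, rfl⟩, ?_⟩
    rw [shiftP_list_prod_sgen, List.map_map]
    simp [Function.comp_def]

lemma sgenProducts_cons_subset {i : ℤ} {M : List ℤ} (hM : M.Nodup) (hgt : ∀ j ∈ M, i < j) :
    sgenProducts (i :: M) ⊆
      (sgen i * ·) '' sgenProducts M ∪ (· * sgen i) '' sgenProducts M := by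
  rintro _ ⟨l, hl, rfl⟩
  obtain ⟨a, b, rfl⟩ := List.append_of_mem (hl.mem_iff.mpr List.mem_cons_self)
  have hab : (a ++ b).Perm M := (List.perm_middle.symm.trans hl).cons_inv
  have hgt_ab : ∀ j ∈ a ++ b, i < j := fun j hj ↦ hgt j (hab.mem_iff.mp hj)
  have hdisj : a.Disjoint b := List.disjoint_of_nodup_append (hab.nodup_iff.mpr hM)
  by_cases hmem : i + 1 ∈ a
  · -- `s_{i+1}` precedes `s_i`, so `s_i` commutes with everything after it
    have hb : ∀ j ∈ b, i + 1 < j := fun j hj ↦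
      lt_of_le_of_ne (hgt_ab j (List.mem_append_right a hj)) fun h ↦ hdisj hmem (h ▸ hj)
    refine Or.inr ⟨_, ⟨a ++ b, hab, rfl⟩, ?_⟩
    simp only [List.map_append, List.prod_append, List.map_cons, List.prod_cons, mul_assoc]
    rw [(sgen_commute_list_prod hb).eq]
  · have ha : ∀ j ∈ a, i + 1 < j := fun j hj ↦
      lt_of_le_of_ne (hgt_ab j (List.mem_append_left b hj)) fun h ↦ hmem (h ▸ hj)
    refine Or.inl ⟨_, ⟨a ++ b, hab, rfl⟩, ?_⟩
    simp only [List.map_append, List.prod_append, List.map_cons, List.prod_cons]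
    rw [← mul_assoc, (sgen_commute_list_prod ha).eq, mul_assoc]

lemma sgenProducts_cons {i : ℤ} {M : List ℤ} (hM : M.Nodup) (hgt : ∀ j ∈ M, i < j) :
    sgenProducts (i :: M) =
      (sgen i * ·) '' sgenProducts M ∪ (· * sgen i) '' sgenProducts M := by
  refine (sgenProducts_cons_subset hM hgt).antisymm ?_
  rintro _ (⟨_, ⟨m, hm, rfl⟩, rfl⟩ | ⟨_, ⟨m, hm, rfl⟩, rfl⟩)
  · exact ⟨i :: m, hm.cons i, by simp⟩
  · exact ⟨m ++ [i], (List.perm_append_singleton _ _).trans (hm.cons i), by simp⟩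

-- `(i : ℤ)` in the binder makes Lean coerce `List.range n` to `List ℤ` through the list monad
lemma map_coe_range_add_one (n : ℕ) :
    (List.range n).map (fun i => (i : ℤ) + 1) = (List.range n).map (fun i : ℕ ↦ (i : ℤ) + 1) := by
  simp only [List.pure_def, List.bind_eq_flatMap, ← List.map_eq_flatMap, List.map_map,
    Function.comp_def]

lemma map_range_succ_cast_add_one (n : ℕ) :
    (List.range (n + 1)).map (fun i : ℕ ↦ (i : ℤ) + 1) =
      1 :: ((List.range n).map (fun i : ℕ ↦ (i : ℤ) + 1)).map (· + 1) := by
  simp [List.range_succ_eq_map, Function.comp_def, add_assoc]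

lemma Iset_succ_eq_sgenProducts (n : ℕ) :
    Iset (n + 1) = sgenProducts ((List.range (n + 1)).map (fun i : ℕ ↦ (i : ℤ) + 1)) := by
  induction n with
  | zero => ext; simp [Iset, sgenProducts, List.perm_singleton]
  | succ n ih =>
    rw [map_range_succ_cast_add_one, sgenProducts_cons, ← image_shiftP_sgenProducts, ← ih,
      Set.image_image, Set.image_image, Iset]
    · exact (List.nodup_range.map fun _ _ h ↦ by simpa using h).map fun _ _ h ↦ by simpa using h
    · simp

lemma Iset_succ_apply_of_nonpos {n : ℕ} {w : Perm ℤ} (hw : w ∈ Iset (n + 1)) {x : ℤ}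
    (hx : x ≤ 0) : w x = x := by
  induction n generalizing w x with
  | zero =>
    obtain rfl : w = sgen 1 := hw
    exact sgen_apply_of_lt (by omega)
  | succ n ih =>
    rcases hw with ⟨v, hv, rfl⟩ | ⟨v, hv, rfl⟩ <;> simp only [Perm.mul_apply, shiftP_apply]
    · rw [ih hv (by omega), sub_add_cancel, sgen_apply_of_lt (by omega)]
    · rw [sgen_apply_of_lt (by omega), ih hv (by omega), sub_add_cancel]

lemma Iset_succ_apply_one_ne {n : ℕ} {w : Perm ℤ} (hw : w ∈ Iset (n + 1)) : w 1 ≠ 1 := by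
  cases n with
  | zero =>
    obtain rfl : w = sgen 1 := hw
    simp [sgen_apply_self]
  | succ n =>
    have hv0 {v : Perm ℤ} (hv : v ∈ Iset (n + 1)) : v 0 = 0 := Iset_succ_apply_of_nonpos hv le_rfl
    rcases hw with ⟨v, hv, rfl⟩ | ⟨v, hv, rfl⟩ <;>
      simp only [Perm.mul_apply, shiftP_apply, sgen_apply_self, sub_self, add_sub_cancel_right,
        hv0 hv, zero_add]
    · decide
    · have : v 1 ≠ 0 := fun h ↦ one_ne_zero (v.injective (h.trans (hv0 hv).symm))
      omega

lemma disjoint_image_Iset_succ (n : ℕ) :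
    Disjoint ((fun w => sgen 1 * shiftP w) '' Iset (n + 1))
      ((fun w => shiftP w * sgen 1) '' Iset (n + 1)) := by
  rw [Set.disjoint_left]
  rintro _ ⟨v, hv, rfl⟩ ⟨u, hu, huv⟩
  have h1 := congrArg (· 1) huv
  simp only [Perm.mul_apply, shiftP_apply, sgen_apply_self, sub_self, add_sub_cancel_right,
    Iset_succ_apply_of_nonpos hv le_rfl, zero_add] at h1
  exact Iset_succ_apply_one_ne hu (by omega)

/-- `I_n` is exactly the set of Coxeter elements of `S_{n+1}` (products of the simple
transpositions `s_1, …, s_n`, each appearing exactly once), and for `n ≥ 2` the union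
defining `I_n` is disjoint. -/
theorem Iset_eq_coxeter_elements (n : ℕ) (hn : 1 ≤ n) :
    (Iset n = {w : Equiv.Perm ℤ | ∃ l : List ℤ,
        l.Perm ((List.range n).map (fun i => (i : ℤ) + 1)) ∧
        w = (l.map sgen).prod}) ∧
    (2 ≤ n → Disjoint ((fun w => sgen 1 * shiftP w) '' Iset (n - 1))
        ((fun w => shiftP w * sgen 1) '' Iset (n - 1))) := by
  obtain ⟨m, rfl⟩ : ∃ m, n = m + 1 := ⟨n - 1, by omega⟩
  refine ⟨(Iset_succ_eq_sgenProducts m).trans (by rw [map_coe_range_add_one]; rfl), fun h2 ↦ ?_⟩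
  obtain ⟨k, rfl⟩ : ∃ k, m = k + 1 := ⟨m - 1, by omega⟩
  exact disjoint_image_Iset_succ k
end

section
/- The operators T_1, ..., T_{r-1} defined on the vector space V^{⊗r}, where V has basis v_1, ..., v_n, by v_a T_i = q v_a if a_i = a_{i+1}, v_a T_i = v_{a·s_i} if a_i > a_{i+1}, and v_a T_i = v_{a·s_i} + (q - q^{-1}) v_a if a_i < a_{i+1}, satisfy the quadratic relation (T_i - q)(T_i + q^{-1}) = 0 for each i. -/
/-- Matrix coefficient of the operator `T` (acting at positions `i`, `j = i+1`) of the
basis vector `v_b` in `v_a T`:  `v_a T = q v_a` if `a_i = a_{i+1}`;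
`v_a T = v_{a·s_i}` if `a_i > a_{i+1}`; `v_a T = v_{a·s_i} + (q - q⁻¹) v_a` if
`a_i < a_{i+1}`. -/
noncomputable def Tcoef {k : Type*} [Field k] (q : k) {n r : ℕ} (i j : Fin r)
    (a b : Fin r → Fin n) : k :=
  if a i = a j then (if b = a then q else 0)
  else if a j < a i then (if b = a ∘ (Equiv.swap i j) then 1 else 0)
  else (if b = a ∘ (Equiv.swap i j) then 1 else 0) + (if b = a then q - q⁻¹ else 0)

/-- The operator `T_i` on `V^{⊗ r}`, realized in coordinates with respect to the basis
`{v_a : a ∈ {1,…,n}^r}` of simple tensors. -/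
noncomputable def heckeT {k : Type*} [Field k] (q : k) {n r : ℕ} (i j : Fin r)
    (f : (Fin r → Fin n) → k) : (Fin r → Fin n) → k :=
  fun b => ∑ a : Fin r → Fin n, f a * Tcoef q i j a b

/-!
If `a_i = a_{i+1}` then `T_i` multiplies `v_a` by `q`. Otherwise, for `a_i < a_{i+1}`, `T_i` preserves
the plane spanned by `v_a` and `v_{a·s_i}` and acts there by the matrix `[[q - q⁻¹, 1], [1, 0]]`.
Both `q` and this matrix are annihilated by `x² - (q - q⁻¹) x - 1 = (x - q)(x + q⁻¹)`.
-/

open Matrix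

lemma comp_swap_comp_swap {α β : Type*} [DecidableEq α] (a : α → β) (i j : α) :
    (a ∘ Equiv.swap i j) ∘ Equiv.swap i j = a := by
  funext x
  simp

section HeckeGenerator

variable {k : Type*} [Field k] (q : k) {n r : ℕ} (i j : Fin r)

/-- Since `T_i` acts on the right, `heckeT q i j f = f ᵥ* heckeMatrix q i j`. -/
noncomputable def heckeMatrix : Matrix (Fin r → Fin n) (Fin r → Fin n) k :=
  Matrix.of (Tcoef q i j)

lemma heckeT_eq_vecMul (f : (Fin r → Fin n) → k) : heckeT q i j f = f ᵥ* heckeMatrix q i j := by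
  funext b
  simp [heckeT, heckeMatrix, vecMul, dotProduct]

variable {q i j}

lemma Tcoef_of_eq {a : Fin r → Fin n} (h : a i = a j) (b : Fin r → Fin n) :
    Tcoef q i j a b = if b = a then q else 0 := by
  simp [Tcoef, h]

lemma Tcoef_of_gt {a : Fin r → Fin n} (h : a j < a i) (b : Fin r → Fin n) :
    Tcoef q i j a b = if b = a ∘ Equiv.swap i j then 1 else 0 := by
  simp [Tcoef, h.ne', h]

lemma Tcoef_of_lt {a : Fin r → Fin n} (h : a i < a j) (b : Fin r → Fin n) :
    Tcoef q i j a b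
      = (if b = a ∘ Equiv.swap i j then 1 else 0) + (if b = a then q - q⁻¹ else 0) := by
  simp [Tcoef, h.ne, h.not_gt]

theorem heckeMatrix_mul_self (hq : q ≠ 0) :
    (heckeMatrix q i j : Matrix (Fin r → Fin n) _ k) * heckeMatrix q i j
      = (q - q⁻¹) • heckeMatrix q i j + 1 := by
  ext a b
  simp only [heckeMatrix, mul_apply, Matrix.add_apply, Matrix.smul_apply, one_apply, of_apply,
    smul_eq_mul, eq_comm (a := a)]
  rcases lt_trichotomy (a i) (a j) with h | h | h
  · have hs : (a ∘ Equiv.swap i j) j < (a ∘ Equiv.swap i j) i := by simpa using h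
    simp only [Tcoef_of_lt h, add_mul, ite_mul, one_mul, zero_mul, Finset.sum_add_distrib,
      Finset.sum_ite_eq', Finset.mem_univ, if_true, Tcoef_of_gt hs, comp_swap_comp_swap]
    split_ifs <;> ring
  · simp only [Tcoef_of_eq h, ite_mul, zero_mul, Finset.sum_ite_eq', Finset.mem_univ, if_true]
    split_ifs
    · field_simp
      ring
    · ring
  · have hs : (a ∘ Equiv.swap i j) i < (a ∘ Equiv.swap i j) j := by simpa using h
    simp only [Tcoef_of_gt h, ite_mul, one_mul, zero_mul, Finset.sum_ite_eq', Finset.mem_univ,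
      if_true, Tcoef_of_lt hs, comp_swap_comp_swap]
    split_ifs <;> ring

end HeckeGenerator

theorem Top_quadratic_general {k : Type*} [Field k] (q : k) (hq : q ≠ 0) {n r : ℕ}
    (i j : Fin r) (f : (Fin r → Fin n) → k) :
    heckeT q i j (heckeT q i j f) = fun b => (q - q⁻¹) * heckeT q i j f b + f b := by
  rw [heckeT_eq_vecMul, heckeT_eq_vecMul, vecMul_vecMul, heckeMatrix_mul_self hq, vecMul_add,
    vecMul_smul, vecMul_one]
  rfl

/-- Each operator `T_i` satisfies the quadratic relation `(T_i - q)(T_i + q⁻¹) = 0`,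
i.e. `T_i² = (q - q⁻¹) T_i + 1`. -/
theorem Top_quadratic {k : Type*} [Field k] (q : k) (hq : q ≠ 0) {n r : ℕ}
    (i j : Fin r) (hij : (i : ℕ) + 1 = (j : ℕ)) (f : (Fin r → Fin n) → k) :
    heckeT q i j (heckeT q i j f) = fun b => (q - q⁻¹) * heckeT q i j f b + f b :=
  Top_quadratic_general q hq i j f
end

section
/- The operators T_1, ..., T_{r-1} on V^{⊗r} (defined via the R-matrix formula) satisfy the braid relations T_i T_{i+1} T_i = T_{i+1} T_i T_{i+1} and T_i T_j = T_j T_i for |i-j| > 1, and hence define a right action of the Iwahori–Hecke algebra H_q(S_r) on tensor space. -/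
lemma swap_comp_invol {α : Type*} [DecidableEq α] {β : Type*} (i j : α) (b : α → β) :
    (b ∘ Equiv.swap i j) ∘ Equiv.swap i j = b := by
  funext x; simp

lemma comp_swap_eq_self {α : Type*} [DecidableEq α] {β : Type*} {i j : α} {b : α → β}
    (h : b i = b j) : b ∘ Equiv.swap i j = b := by
  funext x
  rcases eq_or_ne x i with rfl | hxi
  · simpa using h.symm
  rcases eq_or_ne x j with rfl | hxj
  · simpa using h
  · simp [Equiv.swap_apply_of_ne_of_ne hxi hxj]

lemma Tcoef_eq {k : Type*} [Field k] (q : k) {n r : ℕ} {i j : Fin r}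
    (a b : Fin r → Fin n) :
    Tcoef q i j a b =
      (if a = b then (if b i = b j then q else if b i < b j then q - q⁻¹ else 0) else 0)
      + (if a = b ∘ Equiv.swap i j then (if b i = b j then 0 else 1) else 0) := by
  have hiff : b = a ∘ Equiv.swap i j ↔ a = b ∘ Equiv.swap i j := by
    constructor <;> intro h <;> rw [h, swap_comp_invol]
  unfold Tcoef
  by_cases h1 : a i = a j
  · simp only [h1, if_true]
    rcases eq_or_ne a b with rfl | hab
    · have hb : a i = a j := h1
      simp [hb, comp_swap_eq_self hb]
    · rw [if_neg (Ne.symm hab), if_neg hab]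
      rcases eq_or_ne a (b ∘ Equiv.swap i j) with he | he
      · have hbb : b i = b j := by
          have := h1
          rw [he] at this
          simpa using this.symm
        rw [if_pos he, if_pos hbb, add_zero]
      · rw [if_neg he, add_zero]
  · have hswne : ∀ c : Fin r → Fin n, a = c ∘ Equiv.swap i j → ¬ c i = c j := by
      intro c hc hcc
      apply h1
      rw [hc]
      simpa using hcc.symm
    by_cases h2 : a j < a i
    · simp only [h1, if_false, h2, if_true]
      rcases eq_or_ne b (a ∘ Equiv.swap i j) with he | he
      · have hab : b ≠ a := by
          rintro rfl
          have h5 := congrFun he i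
          simp only [Function.comp_apply, Equiv.swap_apply_left] at h5
          exact h1 h5
        have habs : a = b ∘ Equiv.swap i j := hiff.mp he
        rw [if_pos he, if_neg (Ne.symm hab),
          if_pos habs, if_neg (hswne b habs), zero_add]
      · rw [if_neg he, if_neg (fun h => he (hiff.mpr h)), add_zero]
        rcases eq_or_ne a b with rfl | hab
        · rw [if_pos rfl, if_neg h1, if_neg (asymm h2)]
        · rw [if_neg hab]
    · have h3 : a i < a j := lt_of_le_of_ne (not_lt.mp h2) h1
      simp only [h1, if_false, h2, if_false]
      rcases eq_or_ne b (a ∘ Equiv.swap i j) with he | he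
      · have habs : a = b ∘ Equiv.swap i j := hiff.mp he
        have hab : b ≠ a := by
          rintro rfl
          have h5 := congrFun he i
          simp only [Function.comp_apply, Equiv.swap_apply_left] at h5
          exact h1 h5
        rw [if_pos he, if_neg hab, if_neg (Ne.symm hab), if_pos habs,
          if_neg (hswne b habs), add_zero, zero_add]
      · rw [if_neg he, if_neg (fun h => he (hiff.mpr h)), add_zero, zero_add]
        rcases eq_or_ne a b with rfl | hab
        · rw [if_pos rfl, if_pos rfl, if_neg h1, if_pos h3]
        · rw [if_neg (Ne.symm hab), if_neg hab]

lemma heckeT_apply {k : Type*} [Field k] (q : k) {n r : ℕ} (i j : Fin r)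
    (f : (Fin r → Fin n) → k) (b : Fin r → Fin n) :
    heckeT q i j f b =
      if b i = b j then q * f b
      else if b j < b i then f (b ∘ Equiv.swap i j)
      else f (b ∘ Equiv.swap i j) + (q - q⁻¹) * f b := by
  unfold heckeT
  have key : ∀ a : Fin r → Fin n, f a * Tcoef q i j a b =
      (if a = b then f a * (if b i = b j then q else if b i < b j then q - q⁻¹ else 0) else 0)
      + (if a = b ∘ Equiv.swap i j then f a * (if b i = b j then 0 else 1) else 0) := by
    intro a
    rw [Tcoef_eq q a b]
    split_ifs <;> ring
  rw [Finset.sum_congr rfl (fun a _ => key a), Finset.sum_add_distrib,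
    Finset.sum_ite_eq' Finset.univ, Finset.sum_ite_eq' Finset.univ]
  simp only [Finset.mem_univ, if_true]
  by_cases h1 : b i = b j
  · simp [h1, mul_comm]
  by_cases h2 : b j < b i
  · have h4 : ¬ b i < b j := asymm h2
    simp [h1, h2, h4]
  · have h3 : b i < b j := lt_of_le_of_ne (not_lt.mp h2) h1
    simp only [h1, if_false, h2, if_false, h3, if_true, mul_one]
    ring


lemma hecke_braid {k : Type*} [Field k] (q : k) (hq : q ≠ 0) {n r : ℕ} {i1 i2 i3 : Fin r}
    (h12 : i1 ≠ i2) (h13 : i1 ≠ i3) (h23 : i2 ≠ i3) (f : (Fin r → Fin n) → k) :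
    heckeT q i1 i2 (heckeT q i2 i3 (heckeT q i1 i2 f)) =
    heckeT q i2 i3 (heckeT q i1 i2 (heckeT q i2 i3 f)) := by
  funext b
  have e1 : Equiv.swap i1 i2 i3 = i3 := Equiv.swap_apply_of_ne_of_ne h13.symm h23.symm
  have e2 : Equiv.swap i2 i3 i1 = i1 := Equiv.swap_apply_of_ne_of_ne h12 h13
  have key : ((b ∘ Equiv.swap i1 i2) ∘ Equiv.swap i2 i3) ∘ Equiv.swap i1 i2 =
      ((b ∘ Equiv.swap i2 i3) ∘ Equiv.swap i1 i2) ∘ Equiv.swap i2 i3 := by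
    funext x
    simp only [Function.comp_apply]
    rcases eq_or_ne x i1 with rfl | hx1
    · simp [e1, e2, Equiv.swap_apply_left, Equiv.swap_apply_right]
    rcases eq_or_ne x i2 with rfl | hx2
    · simp [e1, e2, Equiv.swap_apply_left, Equiv.swap_apply_right]
    rcases eq_or_ne x i3 with rfl | hx3
    · simp [e1, e2, Equiv.swap_apply_left, Equiv.swap_apply_right]
    · simp [Equiv.swap_apply_of_ne_of_ne, hx1, hx2, hx3]
  simp only [heckeT_apply, Function.comp_apply, Equiv.swap_apply_left,
    Equiv.swap_apply_right, e1, e2, key, swap_comp_invol]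
  rcases lt_trichotomy (b i1) (b i2) with o1 | o1 | o1 <;>
    rcases lt_trichotomy (b i2) (b i3) with o2 | o2 | o2 <;>
    rcases lt_trichotomy (b i1) (b i3) with o3 | o3 | o3
  · simp [comp_swap_eq_self, swap_comp_invol, Function.comp_apply, Equiv.swap_apply_left,
      Equiv.swap_apply_right, e1, e2, o1, o1.ne, o1.ne', lt_asymm o1, o2, o2.ne, o2.ne', lt_asymm o2, o3, o3.ne, o3.ne', lt_asymm o3]
    all_goals first | rfl | ring1 | (field_simp; ring1)
  · exfalso
    simp only [Fin.lt_def, Fin.ext_iff] at o1 o2 o3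
    omega
  · exfalso
    simp only [Fin.lt_def, Fin.ext_iff] at o1 o2 o3
    omega
  · simp [comp_swap_eq_self, swap_comp_invol, Function.comp_apply, Equiv.swap_apply_left,
      Equiv.swap_apply_right, e1, e2, o1, o1.ne, o1.ne', lt_asymm o1, o2, o3, o3.ne, o3.ne', lt_asymm o3]
    all_goals first | rfl | ring1 | (field_simp; ring1)
  · exfalso
    simp only [Fin.lt_def, Fin.ext_iff] at o1 o2 o3
    omega
  · exfalso
    simp only [Fin.lt_def, Fin.ext_iff] at o1 o2 o3
    omega
  · simp [comp_swap_eq_self, swap_comp_invol, Function.comp_apply, Equiv.swap_apply_left,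
      Equiv.swap_apply_right, e1, e2, o1, o1.ne, o1.ne', lt_asymm o1, o2, o2.ne, o2.ne', lt_asymm o2, o3, o3.ne, o3.ne', lt_asymm o3]
    all_goals first | rfl | ring1 | (field_simp; ring1)
  · simp [comp_swap_eq_self, swap_comp_invol, Function.comp_apply, Equiv.swap_apply_left,
      Equiv.swap_apply_right, e1, e2, o1, o1.ne, o1.ne', lt_asymm o1, o2, o2.ne, o2.ne', lt_asymm o2, o3]
    all_goals first | rfl | ring1 | (field_simp; ring1)
  · simp [comp_swap_eq_self, swap_comp_invol, Function.comp_apply, Equiv.swap_apply_left,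
      Equiv.swap_apply_right, e1, e2, o1, o1.ne, o1.ne', lt_asymm o1, o2, o2.ne, o2.ne', lt_asymm o2, o3, o3.ne, o3.ne', lt_asymm o3]
    all_goals first | rfl | ring1 | (field_simp; ring1)
  · simp [comp_swap_eq_self, swap_comp_invol, Function.comp_apply, Equiv.swap_apply_left,
      Equiv.swap_apply_right, e1, e2, o1, o2, o2.ne, o2.ne', lt_asymm o2, o3, o3.ne, o3.ne', lt_asymm o3]
    all_goals first | rfl | ring1 | (field_simp; ring1)
  · exfalso
    simp only [Fin.lt_def, Fin.ext_iff] at o1 o2 o3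
    omega
  · exfalso
    simp only [Fin.lt_def, Fin.ext_iff] at o1 o2 o3
    omega
  · exfalso
    simp only [Fin.lt_def, Fin.ext_iff] at o1 o2 o3
    omega
  · simp [comp_swap_eq_self, swap_comp_invol, Function.comp_apply, Equiv.swap_apply_left,
      Equiv.swap_apply_right, e1, e2, o1, o2, o3]
    all_goals first | rfl | ring1 | (field_simp; ring1)
  · exfalso
    simp only [Fin.lt_def, Fin.ext_iff] at o1 o2 o3
    omega
  · exfalso
    simp only [Fin.lt_def, Fin.ext_iff] at o1 o2 o3
    omega
  · exfalso
    simp only [Fin.lt_def, Fin.ext_iff] at o1 o2 o3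
    omega
  · simp [comp_swap_eq_self, swap_comp_invol, Function.comp_apply, Equiv.swap_apply_left,
      Equiv.swap_apply_right, e1, e2, o1, o2, o2.ne, o2.ne', lt_asymm o2, o3, o3.ne, o3.ne', lt_asymm o3]
    all_goals first | rfl | ring1 | (field_simp; ring1)
  · simp [comp_swap_eq_self, swap_comp_invol, Function.comp_apply, Equiv.swap_apply_left,
      Equiv.swap_apply_right, e1, e2, o1, o1.ne, o1.ne', lt_asymm o1, o2, o2.ne, o2.ne', lt_asymm o2, o3, o3.ne, o3.ne', lt_asymm o3]
    all_goals first | rfl | ring1 | (field_simp; ring1)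
  · simp [comp_swap_eq_self, swap_comp_invol, Function.comp_apply, Equiv.swap_apply_left,
      Equiv.swap_apply_right, e1, e2, o1, o1.ne, o1.ne', lt_asymm o1, o2, o2.ne, o2.ne', lt_asymm o2, o3]
    all_goals first | rfl | ring1 | (field_simp; ring1)
  · simp [comp_swap_eq_self, swap_comp_invol, Function.comp_apply, Equiv.swap_apply_left,
      Equiv.swap_apply_right, e1, e2, o1, o1.ne, o1.ne', lt_asymm o1, o2, o2.ne, o2.ne', lt_asymm o2, o3, o3.ne, o3.ne', lt_asymm o3]
    all_goals first | rfl | ring1 | (field_simp; ring1)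
  · exfalso
    simp only [Fin.lt_def, Fin.ext_iff] at o1 o2 o3
    omega
  · exfalso
    simp only [Fin.lt_def, Fin.ext_iff] at o1 o2 o3
    omega
  · simp [comp_swap_eq_self, swap_comp_invol, Function.comp_apply, Equiv.swap_apply_left,
      Equiv.swap_apply_right, e1, e2, o1, o1.ne, o1.ne', lt_asymm o1, o2, o3, o3.ne, o3.ne', lt_asymm o3]
    all_goals first | rfl | ring1 | (field_simp; ring1)
  · exfalso
    simp only [Fin.lt_def, Fin.ext_iff] at o1 o2 o3
    omega
  · exfalso
    simp only [Fin.lt_def, Fin.ext_iff] at o1 o2 o3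
    omega
  · simp [comp_swap_eq_self, swap_comp_invol, Function.comp_apply, Equiv.swap_apply_left,
      Equiv.swap_apply_right, e1, e2, o1, o1.ne, o1.ne', lt_asymm o1, o2, o2.ne, o2.ne', lt_asymm o2, o3, o3.ne, o3.ne', lt_asymm o3]
    all_goals first | rfl | ring1 | (field_simp; ring1)

lemma hecke_comm {k : Type*} [Field k] (q : k) {n r : ℕ} {i1 i2 j1 j2 : Fin r}
    (hii : i1 ≠ i2) (hjj : j1 ≠ j2) (h11 : i1 ≠ j1) (h12 : i1 ≠ j2) (h21 : i2 ≠ j1)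
    (h22 : i2 ≠ j2) (f : (Fin r → Fin n) → k) :
    heckeT q i1 i2 (heckeT q j1 j2 f) = heckeT q j1 j2 (heckeT q i1 i2 f) := by
  funext b
  have e1 : Equiv.swap j1 j2 i1 = i1 := Equiv.swap_apply_of_ne_of_ne h11 h12
  have e2 : Equiv.swap j1 j2 i2 = i2 := Equiv.swap_apply_of_ne_of_ne h21 h22
  have e3 : Equiv.swap i1 i2 j1 = j1 := Equiv.swap_apply_of_ne_of_ne h11.symm h21.symm
  have e4 : Equiv.swap i1 i2 j2 = j2 := Equiv.swap_apply_of_ne_of_ne h12.symm h22.symm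
  have key : (b ∘ Equiv.swap i1 i2) ∘ Equiv.swap j1 j2 =
      (b ∘ Equiv.swap j1 j2) ∘ Equiv.swap i1 i2 := by
    funext x
    simp only [Function.comp_apply]
    rcases eq_or_ne x i1 with rfl | hx1
    · simp [e1, e2, e3, e4]
    rcases eq_or_ne x i2 with rfl | hx2
    · simp [e1, e2, e3, e4]
    rcases eq_or_ne x j1 with rfl | hx3
    · simp [e1, e2, e3, e4]
    rcases eq_or_ne x j2 with rfl | hx4
    · simp [e1, e2, e3, e4]
    · simp [Equiv.swap_apply_of_ne_of_ne, hx1, hx2, hx3, hx4]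
  simp only [heckeT_apply, Function.comp_apply, e1, e2, e3, e4, key]
  rcases lt_trichotomy (b i1) (b i2) with o1 | o1 | o1 <;>
    rcases lt_trichotomy (b j1) (b j2) with o2 | o2 | o2
  · simp [comp_swap_eq_self, swap_comp_invol, Function.comp_apply, e1, e2, e3, e4, key,
      o1, o1.ne, o1.ne', lt_asymm o1, o2, o2.ne, o2.ne', lt_asymm o2]
    all_goals first | rfl | ring1 | (field_simp; ring1)
  · simp [comp_swap_eq_self, swap_comp_invol, Function.comp_apply, e1, e2, e3, e4, key,
      o1, o1.ne, o1.ne', lt_asymm o1, o2]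
    all_goals first | rfl | ring1 | (field_simp; ring1)
  · simp [comp_swap_eq_self, swap_comp_invol, Function.comp_apply, e1, e2, e3, e4, key,
      o1, o1.ne, o1.ne', lt_asymm o1, o2, o2.ne, o2.ne', lt_asymm o2]
    all_goals first | rfl | ring1 | (field_simp; ring1)
  · simp [comp_swap_eq_self, swap_comp_invol, Function.comp_apply, e1, e2, e3, e4, key,
      o1, o2, o2.ne, o2.ne', lt_asymm o2]
    all_goals first | rfl | ring1 | (field_simp; ring1)
  · simp [comp_swap_eq_self, swap_comp_invol, Function.comp_apply, e1, e2, e3, e4, key,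
      o1, o2]
    all_goals first | rfl | ring1 | (field_simp; ring1)
  · simp [comp_swap_eq_self, swap_comp_invol, Function.comp_apply, e1, e2, e3, e4, key,
      o1, o2, o2.ne, o2.ne', lt_asymm o2]
    all_goals first | rfl | ring1 | (field_simp; ring1)
  · simp [comp_swap_eq_self, swap_comp_invol, Function.comp_apply, e1, e2, e3, e4, key,
      o1, o1.ne, o1.ne', lt_asymm o1, o2, o2.ne, o2.ne', lt_asymm o2]
    all_goals first | rfl | ring1 | (field_simp; ring1)
  · simp [comp_swap_eq_self, swap_comp_invol, Function.comp_apply, e1, e2, e3, e4, key,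
      o1, o1.ne, o1.ne', lt_asymm o1, o2]
    all_goals first | rfl | ring1 | (field_simp; ring1)
  · simp [comp_swap_eq_self, swap_comp_invol, Function.comp_apply, e1, e2, e3, e4, key,
      o1, o1.ne, o1.ne', lt_asymm o1, o2, o2.ne, o2.ne', lt_asymm o2]
    all_goals first | rfl | ring1 | (field_simp; ring1)

/-- The operators `T_1, …, T_{r-1}` satisfy the type `A` braid relations
`T_i T_{i+1} T_i = T_{i+1} T_i T_{i+1}` and `T_i T_j = T_j T_i` for `|i - j| > 1`
(together with the quadratic relation, this means they define a right action of the
Iwahori–Hecke algebra `H_q(S_r)` on tensor space). -/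
theorem Top_braid {k : Type*} [Field k] (q : k) (hq : q ≠ 0) {n r : ℕ} :
    (∀ (i1 i2 i3 : Fin r), (i1 : ℕ) + 1 = (i2 : ℕ) → (i2 : ℕ) + 1 = (i3 : ℕ) →
      ∀ f : (Fin r → Fin n) → k,
        heckeT q i1 i2 (heckeT q i2 i3 (heckeT q i1 i2 f)) =
        heckeT q i2 i3 (heckeT q i1 i2 (heckeT q i2 i3 f))) ∧
    (∀ (i1 i2 j1 j2 : Fin r), (i1 : ℕ) + 1 = (i2 : ℕ) → (j1 : ℕ) + 1 = (j2 : ℕ) →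
      ((i2 : ℕ) < (j1 : ℕ) ∨ (j2 : ℕ) < (i1 : ℕ)) →
      ∀ f : (Fin r → Fin n) → k,
        heckeT q i1 i2 (heckeT q j1 j2 f) = heckeT q j1 j2 (heckeT q i1 i2 f)) := by
  constructor
  · intro i1 i2 i3 ha hb f
    exact hecke_braid q hq (Fin.ne_of_val_ne (by omega)) (Fin.ne_of_val_ne (by omega))
      (Fin.ne_of_val_ne (by omega)) f
  · intro i1 i2 j1 j2 ha hb hc f
    rcases hc with hc | hc <;>
    exact hecke_comm q (Fin.ne_of_val_ne (by omega)) (Fin.ne_of_val_ne (by omega))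
      (Fin.ne_of_val_ne (by omega)) (Fin.ne_of_val_ne (by omega))
      (Fin.ne_of_val_ne (by omega)) (Fin.ne_of_val_ne (by omega)) f
end

section
/- Let T be the operator on V ⊗ V (V with basis v_1,...,v_n) given by T(v_s ⊗ v_t) = q v_s ⊗ v_t if s = t; (q - q^{-1}) v_s ⊗ v_t + v_t ⊗ v_s if s < t; and v_t ⊗ v_s if s > t. Let E be the operator on V with E v_{i+1} = v_i (for a fixed i) and E v_t = 0 for t ≠ i+1, and let K be the diagonal operator with K v_t = q^{δ_{t,i} - δ_{t,i+1}} v_t. Then T ∘ (E ⊗ I + K ⊗ E) = (E ⊗ I + K ⊗ E) ∘ T. -/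
set_option maxHeartbeats 2000000

lemma Tact_closed {k : Type*} [Field k] (q : k) {n : ℕ} (f : Fin n → Fin n → k) (u w : Fin n) :
    (∑ s : Fin n, ∑ t : Fin n, f s t *
      (if s = t then (if u = s ∧ w = s then q else 0)
       else if s < t then
         (if u = s ∧ w = t then q - q⁻¹ else 0) + (if u = t ∧ w = s then 1 else 0)
       else (if u = t ∧ w = s then 1 else 0)))
    = (if u = w then q * f u u else 0) + (if u < w then (q - q⁻¹) * f u w else 0)
      + (if u = w then 0 else f w u) := by
  have key : ∀ s t : Fin n, f s t *
      (if s = t then (if u = s ∧ w = s then q else 0)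
       else if s < t then
         (if u = s ∧ w = t then q - q⁻¹ else 0) + (if u = t ∧ w = s then 1 else 0)
       else (if u = t ∧ w = s then 1 else 0))
      = (if s = u then if t = u then (if u = w then q * f u u else 0) else 0 else 0)
        + (if s = u then if t = w then (if u < w then (q - q⁻¹) * f u w else 0) else 0 else 0)
        + (if s = w then if t = u then (if u = w then 0 else f w u) else 0 else 0) := by
    intro s t
    simp only [ite_and]
    split_ifs <;> subst_vars <;>
      first
        | ring1
        | (exfalso; first | omega | (simp only [Fin.lt_def, Fin.ext_iff] at *; omega))
  rw [Finset.sum_congr rfl fun s _ => Finset.sum_congr rfl fun t _ => key s t]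
  simp [Finset.sum_add_distrib, Finset.sum_ite_eq']


/-- The `R`-matrix operator `T` on `V ⊗ V` commutes with
`Δ(E_i) = E_i ⊗ I + K̃_i ⊗ E_i`.  Here `V ⊗ V` is realized in coordinates as
`Fin n → Fin n → k` with respect to the basis of simple tensors `v_s ⊗ v_t`,
`T(v_s ⊗ v_t) = q v_s ⊗ v_t` if `s = t`, `(q - q⁻¹) v_s ⊗ v_t + v_t ⊗ v_s` if `s < t`,
and `v_t ⊗ v_s` if `s > t`; `E v_{i+1} = v_i`, `E v_t = 0` otherwise, and
`K v_t = q^{δ_{t,i} - δ_{t,i+1}} v_t`. -/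
theorem T_commutes_with_DeltaE {k : Type*} [Field k] (q : k) (hq : q ≠ 0)
    {n : ℕ} (i i' : Fin n) (hi : (i : ℕ) + 1 = (i' : ℕ)) :
    let Eop : (Fin n → k) → (Fin n → k) := fun g s => if s = i then g i' else 0
    let Kop : (Fin n → k) → (Fin n → k) :=
      fun g s => (if s = i then q else if s = i' then q⁻¹ else 1) * g s
    let Iop : (Fin n → k) → (Fin n → k) := fun g => g
    let tprod : ((Fin n → k) → (Fin n → k)) → ((Fin n → k) → (Fin n → k)) →
        (Fin n → Fin n → k) → (Fin n → Fin n → k) :=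
      fun A B f s t => A (fun u => B (f u) t) s
    let Tcoef : Fin n → Fin n → Fin n → Fin n → k := fun s t u w =>
      if s = t then (if u = s ∧ w = s then q else 0)
      else if s < t then
        (if u = s ∧ w = t then q - q⁻¹ else 0) + (if u = t ∧ w = s then 1 else 0)
      else (if u = t ∧ w = s then 1 else 0)
    let Tact : (Fin n → Fin n → k) → (Fin n → Fin n → k) :=
      fun f u w => ∑ s : Fin n, ∑ t : Fin n, f s t * Tcoef s t u w
    ∀ f : Fin n → Fin n → k,
      Tact (fun s t => tprod Eop Iop f s t + tprod Kop Eop f s t) =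
        (fun s t => tprod Eop Iop (Tact f) s t + tprod Kop Eop (Tact f) s t) := by
  intro Eop Kop Iop tprod Tcoef Tact f
  funext u w
  simp only [Tact, Tcoef, tprod, Eop, Kop, Iop]
  rw [Tact_closed q, Tact_closed q, Tact_closed q]
  split_ifs <;>
    first
      | ring1
      | (exfalso; omega)
      | (subst_vars; first | ring1 | (exfalso; omega) | (field_simp; try ring1))
end

section
/- Let T be the R-matrix operator on V ⊗ V as above, F the operator on V with F v_i = v_{i+1} (for a fixed i) and F v_t = 0 for t ≠ i, and K the diagonal operator with K v_t = q^{δ_{t,i} - δ_{t,i+1}} v_t. Then T ∘ (F ⊗ K^{-1} + I ⊗ F) = (F ⊗ K^{-1} + I ⊗ F) ∘ T. -/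
set_option maxHeartbeats 2000000 in
/-- The `R`-matrix operator `T` on `V ⊗ V` commutes with
`Δ(F_i) = F_i ⊗ K⁻¹ + I ⊗ F_i`.  Here `V ⊗ V` is realized in coordinates as
`Fin n → Fin n → k` with respect to the basis of simple tensors `v_s ⊗ v_t`,
`T(v_s ⊗ v_t) = q v_s ⊗ v_t` if `s = t`, `(q - q⁻¹) v_s ⊗ v_t + v_t ⊗ v_s` if `s < t`,
and `v_t ⊗ v_s` if `s > t`; `F v_i = v_{i+1}`, `F v_t = 0` otherwise, and
`K v_t = q^{δ_{t,i} - δ_{t,i+1}} v_t`. -/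
theorem T_commutes_with_DeltaF {k : Type*} [Field k] (q : k) (hq : q ≠ 0)
    {n : ℕ} (i i' : Fin n) (hi : (i : ℕ) + 1 = (i' : ℕ)) :
    let Fop : (Fin n → k) → (Fin n → k) := fun g s => if s = i' then g i else 0
    let Kinvop : (Fin n → k) → (Fin n → k) :=
      fun g s => (if s = i then q⁻¹ else if s = i' then q else 1) * g s
    let Iop : (Fin n → k) → (Fin n → k) := fun g => g
    let tprod : ((Fin n → k) → (Fin n → k)) → ((Fin n → k) → (Fin n → k)) →
        (Fin n → Fin n → k) → (Fin n → Fin n → k) :=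
      fun A B f s t => A (fun u => B (f u) t) s
    let Tcoef : Fin n → Fin n → Fin n → Fin n → k := fun s t u w =>
      if s = t then (if u = s ∧ w = s then q else 0)
      else if s < t then
        (if u = s ∧ w = t then q - q⁻¹ else 0) + (if u = t ∧ w = s then 1 else 0)
      else (if u = t ∧ w = s then 1 else 0)
    let Tact : (Fin n → Fin n → k) → (Fin n → Fin n → k) :=
      fun f u w => ∑ s : Fin n, ∑ t : Fin n, f s t * Tcoef s t u w
    ∀ f : Fin n → Fin n → k,
      Tact (fun s t => tprod Fop Kinvop f s t + tprod Iop Fop f s t) =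
        (fun s t => tprod Fop Kinvop (Tact f) s t + tprod Iop Fop (Tact f) s t) := by
  intro Fop Kinvop Iop tprod Tcoef Tact f
  have hcoef : ∀ s t u w : Fin n, Tcoef s t u w =
      (if s = u ∧ t = w then (if u = w then q else if u < w then q - q⁻¹ else 0) else 0) +
      (if s = w ∧ t = u then (if u = w then (0:k) else 1) else 0) := by
    intro s t u w
    simp only [Tcoef]
    split_ifs <;> first
      | ring1
      | (exfalso; omega)
  have hsum : ∀ g : Fin n → Fin n → k, ∀ u w, Tact g u w =
      g u w * (if u = w then q else if u < w then q - q⁻¹ else 0) +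
      g w u * (if u = w then (0:k) else 1) := by
    intro g u w
    simp only [Tact, hcoef, mul_add, Finset.sum_add_distrib, mul_ite, mul_zero, ite_and,
      Finset.sum_ite_eq, Finset.sum_ite_eq', Finset.sum_ite_irrel, Finset.sum_const_zero,
      Finset.mem_univ, if_true]
  funext u w
  simp only [hsum, tprod, Fop, Kinvop, Iop]
  split_ifs <;> first
    | ring1
    | (exfalso; omega)
    | (field_simp; first | done | ring1)
    | (subst_vars; first | ring1 | (field_simp; first | done | ring1))
end

section
/- In the free associative ℚ(x)-algebra on generators F_1, ..., F_n modulo only the commutation relations F_iF_j = F_jF_i for |i-j| > 1, the elements F_1 Ψ and Ψ F_1 are linearly independent whenever Ψ is a nonzero linear combination of Coxeter monomials in F_2, ..., F_n (n ≥ 2). -/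
/-!
The algebra embeds into the monoid algebra of the trace monoid on `Fin n` in which `i` and `j`
commute when `|i - j| > 1` (the two presentations have the same relations). There `Ψ` becomes a
nonzero combination of Coxeter words, none of which contains the letter `0` (standing for `F_1`).
The monoid map `x ↦ (x with the letter 0 erased, x restricted to the letters 0 and 1)`, with the
restriction valued in the free monoid on `u` (for `0`) and `v` (for `1`), sends every Coxeter
word `x` to `(x, v ^ k)` for one fixed `k ≥ 1`, hence `F_1 x` to `(x, u v ^ k)` and `x F_1` to
`(x, v ^ k u)`. As `u v ^ k ≠ v ^ k u`, the images of `F_1 Ψ` and `Ψ F_1` are copies of `Ψ` with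
disjoint supports, so they are linearly independent.
-/

/-- The commutation relations defining the algebra generated by `F_1, …, F_n` subject
only to `F_i F_j = F_j F_i` for `|i - j| > 1`.  The generator indexed by `i : Fin n`
stands for `F_{i+1}`. -/
def commRel (K : Type*) [Field K] (n : ℕ) :
    FreeAlgebra K (Fin n) → FreeAlgebra K (Fin n) → Prop := fun a b =>
  ∃ i j : Fin n, ((i : ℕ) + 1 < (j : ℕ) ∨ (j : ℕ) + 1 < (i : ℕ)) ∧
    a = FreeAlgebra.ι K i * FreeAlgebra.ι K j ∧
    b = FreeAlgebra.ι K j * FreeAlgebra.ι K i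

open MonoidAlgebra

theorem List.mem_drop_one_finRange {n : ℕ} {i : Fin n} :
    i ∈ (List.finRange n).drop 1 ↔ (i : ℕ) ≠ 0 := by
  obtain _ | m := n
  · exact i.elim0
  rw [List.finRange_succ, List.drop_one, List.tail_cons, List.mem_map]
  refine ⟨fun ⟨j, _, hj⟩ => hj ▸ Nat.succ_ne_zero j,
    fun hi => ⟨i.pred (Fin.ne_of_val_ne hi), List.mem_finRange _, Fin.succ_pred _ _⟩⟩

theorem FreeMonoid.of_mul_pow_ne_pow_mul_of {α : Type*} {a b : α} (hab : a ≠ b) {k : ℕ}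
    (hk : k ≠ 0) : of a * of b ^ k ≠ of b ^ k * of a := by
  obtain ⟨k, rfl⟩ := Nat.exists_eq_succ_of_ne_zero hk
  intro h
  simpa [pow_succ', hab] using congrArg (fun x => x.toList.head?) h

def traceRels {α : Type*} (I : α → α → Prop) : FreeMonoid α → FreeMonoid α → Prop :=
  fun a b => ∃ i j, I i j ∧ a = .of i * .of j ∧ b = .of j * .of i

abbrev TraceMonoid {α : Type*} (I : α → α → Prop) := PresentedMonoid (traceRels I)

namespace TraceMonoid

variable {α : Type*} {I : α → α → Prop}

theorem commute_of {i j : α} (h : I i j) :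
    Commute (PresentedMonoid.of (traceRels I) i) (.of _ j) :=
  PresentedMonoid.mk_eq_mk_of_rel ⟨i, j, h, rfl, rfl⟩

variable {M : Type*} [Monoid M]

def lift (f : α → M) (hf : ∀ i j, I i j → Commute (f i) (f j)) : TraceMonoid I →* M :=
  PresentedMonoid.lift f <| by
    rintro _ _ ⟨i, j, hij, rfl, rfl⟩
    simpa using (hf i j hij).eq

@[simp]
theorem lift_of (f : α → M) (hf : ∀ i j, I i j → Commute (f i) (f j)) (i : α) :
    lift f hf (PresentedMonoid.of _ i) = f i :=
  rfl

end TraceMonoid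

namespace MonoidAlgebra

variable {M N W : Type*}

theorem linearIndependent_mapDomain_pair {R : Type*} [Ring R] [NoZeroDivisors R] {f g : M → N}
    (hf : f.Injective) (hg : g.Injective) (hfg : ∀ x y, f x ≠ g y) {p : R[M]} (hp : p ≠ 0) :
    LinearIndependent R ![mapDomain f p, mapDomain g p] := by
  obtain ⟨x, hx⟩ : ∃ x, p.coeff x ≠ 0 := by
    by_contra! h
    exact hp (coeff_eq_zero.1 (Finsupp.ext h))
  refine LinearIndependent.pair_iff.2 fun s t hst => ?_
  have hcoeff := fun y => congrArg (fun q : R[N] => q.coeff y) hst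
  have hfx := hcoeff (f x)
  have hgx := hcoeff (g x)
  simp only [coeff_add, coeff_smul, coeff_mapDomain, Finsupp.add_apply, Finsupp.smul_apply,
    Finsupp.mapDomain_apply hf, Finsupp.mapDomain_apply hg, smul_eq_mul, coeff_zero,
    Finsupp.coe_zero, Pi.zero_apply] at hfx hgx
  rw [Finsupp.mapDomain_of_notMem_range _ _ (by rintro ⟨y, hy⟩; exact hfg x y hy.symm)] at hfx
  rw [Finsupp.mapDomain_of_notMem_range _ _ (by rintro ⟨y, hy⟩; exact hfg y x hy)] at hgx
  simp only [mul_zero, add_zero, zero_add, mul_eq_zero, hx, or_false] at hfx hgx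
  exact ⟨hfx, hgx⟩

variable [Monoid M] [Monoid W]

theorem linearIndependent_single_mul_mul_single {R : Type*} [CommRing R] [NoZeroDivisors R]
    (χ : M →* M × W) {c : M} {u w : W} (hc : χ c = (1, u)) (huw : u * w ≠ w * u) {S : Set M}
    (hS : ∀ x ∈ S, χ x = (x, w)) {p : R[M]} (hpS : p ∈ Submodule.span R ((single · 1) '' S))
    (hp : p ≠ 0) :
    LinearIndependent R ![single c 1 * p, p * single c 1] := by
  have hl : mapDomain χ (single c 1 * p) = mapDomain (·, u * w) p :=
    LinearMap.eqOn_span' (f := mapDomainLinearMap R R χ ∘ₗ LinearMap.mulLeft R (single c 1))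
      (g := mapDomainLinearMap R R (·, u * w)) (by rintro _ ⟨x, hx, rfl⟩; simp [hc, hS x hx]) hpS
  have hr : mapDomain χ (p * single c 1) = mapDomain (·, w * u) p :=
    LinearMap.eqOn_span' (f := mapDomainLinearMap R R χ ∘ₗ LinearMap.mulRight R (single c 1))
      (g := mapDomainLinearMap R R (·, w * u)) (by rintro _ ⟨x, hx, rfl⟩; simp [hc, hS x hx]) hpS
  have hli := linearIndependent_mapDomain_pair (Prod.mk_left_injective (u * w))
    (Prod.mk_left_injective (w * u)) (fun x y h => huw (Prod.ext_iff.1 h).2) hp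
  refine LinearIndependent.pair_iff.2 fun s t hst => LinearIndependent.pair_iff.1 hli s t ?_
  rw [← hl, ← hr, ← mapDomain_smul, ← mapDomain_smul, ← mapDomain_add, hst, mapDomain_zero]

end MonoidAlgebra

def Distant (n : ℕ) (i j : Fin n) : Prop := (i : ℕ) + 1 < j ∨ (j : ℕ) + 1 < i

section Embedding

variable (K : Type*) [Field K] (n : ℕ)

noncomputable def toMonoidAlgebra : RingQuot (commRel K n) →ₐ[K] K[TraceMonoid (Distant n)] :=
  RingQuot.liftAlgHom K ⟨FreeAlgebra.lift K fun i => of K _ (PresentedMonoid.of _ i), by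
    rintro _ _ ⟨i, j, hij, rfl, rfl⟩
    simp only [map_mul, FreeAlgebra.lift_ι_apply]
    exact ((TraceMonoid.commute_of (I := Distant n) hij).map (of K _)).eq⟩

noncomputable def ofMonoidAlgebra : K[TraceMonoid (Distant n)] →ₐ[K] RingQuot (commRel K n) :=
  lift K _ _ <| TraceMonoid.lift (fun i => RingQuot.mkAlgHom K (commRel K n) (FreeAlgebra.ι K i))
    fun i j hij => by
      simp only [Commute, SemiconjBy, ← map_mul]
      exact RingQuot.mkAlgHom_rel K ⟨i, j, hij, rfl, rfl⟩

variable {K n}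

@[simp]
theorem toMonoidAlgebra_mkAlgHom_ι (i : Fin n) :
    toMonoidAlgebra K n (RingQuot.mkAlgHom K (commRel K n) (FreeAlgebra.ι K i)) =
      single (PresentedMonoid.of _ i) 1 := by
  simp [toMonoidAlgebra, RingQuot.liftAlgHom_mkAlgHom_apply]

theorem toMonoidAlgebra_list_prod (l : List (Fin n)) :
    toMonoidAlgebra K n
        (l.map fun i => RingQuot.mkAlgHom K (commRel K n) (FreeAlgebra.ι K i)).prod =
      single (l.map (PresentedMonoid.of _)).prod 1 := by
  rw [map_list_prod, List.map_map, ← of_apply, map_list_prod, List.map_map]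
  congr 2
  ext i
  simp

theorem ofMonoidAlgebra_toMonoidAlgebra (x : RingQuot (commRel K n)) :
    ofMonoidAlgebra K n (toMonoidAlgebra K n x) = x := by
  suffices (ofMonoidAlgebra K n).comp (toMonoidAlgebra K n) = AlgHom.id K _ from
    AlgHom.congr_fun this x
  refine RingQuot.ringQuot_ext' _ _ _ (FreeAlgebra.hom_ext (funext fun i => ?_))
  simp [ofMonoidAlgebra]

theorem toMonoidAlgebra_injective : Function.Injective (toMonoidAlgebra K n) :=
  Function.LeftInverse.injective ofMonoidAlgebra_toMonoidAlgebra

end Embedding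

def coxeterWords (n : ℕ) : Set (TraceMonoid (Distant n)) :=
  {x | ∃ l : List (Fin n), l.Perm ((List.finRange n).drop 1) ∧
    x = (l.map (PresentedMonoid.of _)).prod}

section CoxeterWords

variable {n : ℕ}

def eraseZero : TraceMonoid (Distant n) →* TraceMonoid (Distant n) :=
  TraceMonoid.lift (fun i => if (i : ℕ) = 0 then 1 else PresentedMonoid.of _ i) fun i j hij => by
    split_ifs
    all_goals first
      | exact Commute.one_left _
      | exact Commute.one_right _
      | exact TraceMonoid.commute_of hij

def projZeroOne : TraceMonoid (Distant n) →* FreeMonoid Bool :=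
  TraceMonoid.lift
    (fun i => if (i : ℕ) = 0 then .of true else if (i : ℕ) = 1 then .of false else 1)
    fun i j hij => by
      unfold Distant at hij
      split_ifs
      all_goals first
        | exact Commute.one_left _
        | exact Commute.one_right _
        | omega

theorem eraseZero_list_prod {l : List (Fin n)} (hl : ∀ i ∈ l, (i : ℕ) ≠ 0) :
    eraseZero (l.map (PresentedMonoid.of (traceRels (Distant n)))).prod =
      (l.map (PresentedMonoid.of _)).prod := by
  induction l with
  | nil => simp
  | cons a l ih => simp_all [eraseZero]

theorem projZeroOne_list_prod {l : List (Fin n)} (hl : ∀ i ∈ l, (i : ℕ) ≠ 0) :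
    projZeroOne (l.map (PresentedMonoid.of (traceRels (Distant n)))).prod =
      .of false ^ l.countP (fun i : Fin n => (i : ℕ) = 1) := by
  induction l with
  | nil => simp
  | cons a l ih =>
    simp only [List.forall_mem_cons] at hl
    simp only [List.map_cons, List.prod_cons, map_mul, ih hl.2]
    by_cases ha : (a : ℕ) = 1 <;> simp [projZeroOne, hl.1, ha, pow_succ']

theorem eraseZero_prod_projZeroOne_of_mem_coxeterWords {x : TraceMonoid (Distant n)}
    (hx : x ∈ coxeterWords n) :
    (eraseZero.prod projZeroOne) x =
      (x, .of false ^ ((List.finRange n).drop 1).countP fun i : Fin n => (i : ℕ) = 1) := by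
  obtain ⟨l, hl, rfl⟩ := hx
  have hl0 : ∀ i ∈ l, (i : ℕ) ≠ 0 := fun i hi => List.mem_drop_one_finRange.1 (hl.subset hi)
  rw [MonoidHom.prod_apply, eraseZero_list_prod hl0, projZeroOne_list_prod hl0, hl.countP_eq]

theorem toMonoidAlgebra_mem_span_coxeterWords {K : Type*} [Field K] {Ψ : RingQuot (commRel K n)}
    (hΨ : Ψ ∈ Submodule.span K {x | ∃ l : List (Fin n), l.Perm ((List.finRange n).drop 1) ∧
      x = (l.map fun i => RingQuot.mkAlgHom K (commRel K n) (FreeAlgebra.ι K i)).prod}) :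
    toMonoidAlgebra K n Ψ ∈ Submodule.span K ((single · 1) '' coxeterWords n) := by
  refine Submodule.span_mono ?_
    (Submodule.apply_mem_span_image_of_mem_span (toMonoidAlgebra K n).toLinearMap hΨ)
  rintro _ ⟨_, ⟨l, hl, rfl⟩, rfl⟩
  exact ⟨_, ⟨l, hl, rfl⟩, (toMonoidAlgebra_list_prod l).symm⟩

end CoxeterWords

/-- In the algebra on `F_1, …, F_n` modulo only the distant commutation relations, the
elements `F_1 Ψ` and `Ψ F_1` are linearly independent whenever `Ψ` is a nonzero linear
combination of Coxeter monomials in `F_2, …, F_n` (products in which each of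
`F_2, …, F_n` appears exactly once). -/
theorem F1Psi_PsiF1_linearIndependent (K : Type*) [Field K] (n : ℕ) (hn : 2 ≤ n)
    (Ψ : RingQuot (commRel K n))
    (hmem : Ψ ∈ Submodule.span K
      {x : RingQuot (commRel K n) | ∃ l : List (Fin n),
        l.Perm ((List.finRange n).drop 1) ∧
        x = (l.map (fun i =>
          RingQuot.mkAlgHom K (commRel K n) (FreeAlgebra.ι K i))).prod})
    (hne : Ψ ≠ 0) :
    ∀ a b : K,
      a • (RingQuot.mkAlgHom K (commRel K n) (FreeAlgebra.ι K (⟨0, by omega⟩ : Fin n)) * Ψ) +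
        b • (Ψ * RingQuot.mkAlgHom K (commRel K n) (FreeAlgebra.ι K (⟨0, by omega⟩ : Fin n))) = 0 →
      a = 0 ∧ b = 0 := by
  have hk : ((List.finRange n).drop 1).countP (fun i : Fin n => (i : ℕ) = 1) ≠ 0 :=
    (List.countP_pos_iff.2
      ⟨⟨1, hn⟩, List.mem_drop_one_finRange.2 one_ne_zero, decide_eq_true rfl⟩).ne'
  have hli := linearIndependent_single_mul_mul_single (eraseZero.prod projZeroOne)
    (c := PresentedMonoid.of _ ⟨0, by omega⟩) (by simp [eraseZero, projZeroOne])
    (FreeMonoid.of_mul_pow_ne_pow_mul_of (a := true) (b := false) (by decide) hk)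
    (fun _ => eraseZero_prod_projZeroOne_of_mem_coxeterWords)
    (toMonoidAlgebra_mem_span_coxeterWords hmem)
    ((map_ne_zero_iff _ toMonoidAlgebra_injective).2 hne)
  intro a b hab
  refine LinearIndependent.pair_iff.1 hli a b ?_
  simpa using congrArg (toMonoidAlgebra K n) hab
end

section
/- Adjointness of E and F on tensor space: for the standard symmetric bilinear form on V^{⊗k} making simple tensors orthonormal, and for weight vectors b, b' of weights λ, λ' (with respect to the diagonal operators K_j), one has ⟨E_i b, b'⟩ = q^{λ_i - λ_{i+1} + 1} ⟨b, F_i b'⟩, where E_i acts by the iterated coproduct Σ_j K̃_i^{⊗(j-1)} ⊗ E_i ⊗ 1^{⊗(k-j)} and F_i acts by Σ_j 1^{⊗(j-1)} ⊗ F_i ⊗ (K̃_i^{-1})^{⊗(k-j)}. -/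
/-- Adjointness of `E_i` and `F_i` on tensor space: for the standard symmetric bilinear
form on `V^{⊗r}` (coordinates `(Fin r → Fin n) → k`, form `⟨f,g⟩ = ∑_a f a * g a`) and
weight vectors `f`, `g` of weights `λ`, `λ'` (eigenvectors of the diagonal operators
`K_j`, which act on the basis vector `v_a` by `q^{#{l : a_l = j}}`), one has
`⟨E_i f, g⟩ = q^{λ_i - λ_{i+1} + 1} ⟨f, F_i g⟩`, where `E_i` acts by
`∑_j K̃_i^{⊗(j-1)} ⊗ E_i ⊗ 1^{⊗(r-j)}` and `F_i` by
`∑_j 1^{⊗(j-1)} ⊗ F_i ⊗ (K̃_i⁻¹)^{⊗(r-j)}`. -/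
theorem adjointness_EF {k : Type*} [Field k] (q : k) (hq : q ≠ 0) {n r : ℕ}
    (i i' : Fin n) (hi : (i : ℕ) + 1 = (i' : ℕ)) (lam lam' : Fin n → ℤ)
    (f g : (Fin r → Fin n) → k)
    (hf : ∀ (j : Fin n) (a : Fin r → Fin n),
      q ^ (((Finset.univ.filter fun l => a l = j).card : ℤ)) * f a = q ^ (lam j) * f a)
    (hg : ∀ (j : Fin n) (a : Fin r → Fin n),
      q ^ (((Finset.univ.filter fun l => a l = j).card : ℤ)) * g a = q ^ (lam' j) * g a) :
    let κ : Fin n → k := fun t => if t = i then q else if t = i' then q⁻¹ else 1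
    let κ' : Fin n → k := fun t => if t = i then q⁻¹ else if t = i' then q else 1
    let Eact : ((Fin r → Fin n) → k) → ((Fin r → Fin n) → k) := fun h a =>
      ∑ j : Fin r, if a j = i then
        (∏ l : Fin r, if l < j then κ (a l) else 1) * h (Function.update a j i') else 0
    let Fact : ((Fin r → Fin n) → k) → ((Fin r → Fin n) → k) := fun h a =>
      ∑ j : Fin r, if a j = i' then
        (∏ l : Fin r, if j < l then κ' (a l) else 1) * h (Function.update a j i) else 0
    let form : ((Fin r → Fin n) → k) → ((Fin r → Fin n) → k) → k :=
      fun h h' => ∑ a : Fin r → Fin n, h a * h' a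
    form (Eact f) g = q ^ (lam i - lam i' + 1) * form f (Fact g) := by
  intro κ κ' Eact Fact form
  have hine : i ≠ i' := by
    intro h
    rw [h] at hi
    omega
  have hκi' : κ i' = q⁻¹ := by
    simp [κ, Ne.symm hine]
  have hκκ' : ∀ t, κ t * κ' t = 1 := by
    intro t
    by_cases h1 : t = i
    · simp [κ, κ', h1, hine, Ne.symm hine, mul_inv_cancel₀ hq]
    · by_cases h2 : t = i'
      · simp [κ, κ', h1, h2, hine, Ne.symm hine, inv_mul_cancel₀ hq]
      · simp [κ, κ', h1, h2, hine, Ne.symm hine]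
  -- the full product of κ over a configuration
  have hcount : ∀ b : Fin r → Fin n, (∏ l, κ (b l)) =
      q ^ (((Finset.univ.filter fun l => b l = i).card : ℤ)) *
      q ^ (-((Finset.univ.filter fun l => b l = i').card : ℤ)) := by
    intro b
    have hfac : ∀ l : Fin r, κ (b l) =
        (if b l = i then q else 1) * (if b l = i' then q⁻¹ else 1) := by
      intro l
      by_cases h1 : b l = i
      · simp [κ, h1, hine, Ne.symm hine]
      · by_cases h2 : b l = i'
        · simp [κ, h1, h2, hine, Ne.symm hine]
        · simp [κ, h1, h2, hine, Ne.symm hine]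
    rw [Finset.prod_congr rfl fun l _ => hfac l, Finset.prod_mul_distrib,
      Finset.prod_ite, Finset.prod_ite]
    simp [Finset.prod_const, zpow_natCast, zpow_neg, inv_pow]
  have hz : ∀ m : ℤ, q ^ m ≠ 0 := fun m => zpow_ne_zero m hq
  -- weight computation for f
  have key : ∀ b : Fin r → Fin n,
      (∏ l, κ (b l)) * f b = q ^ (lam i - lam i') * f b := by
    intro b
    set c : ℕ := (Finset.univ.filter fun l => b l = i).card with hc
    set c' : ℕ := (Finset.univ.filter fun l => b l = i').card with hc'
    have e1 : q ^ ((c : ℤ)) * f b = q ^ (lam i) * f b := hf i b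
    have e2 : q ^ ((c' : ℤ)) * f b = q ^ (lam i') * f b := hf i' b
    have e3 : q ^ (-(c' : ℤ)) * f b = q ^ (-(lam i')) * f b := by
      have h4 : q ^ ((-(c' : ℤ) - lam i') + (c' : ℤ)) * f b =
          q ^ ((-(c' : ℤ) - lam i') + lam i') * f b := by
        rw [zpow_add₀ hq, zpow_add₀ hq, mul_assoc, mul_assoc, e2]
      have ha : (-(c' : ℤ) - lam i') + (c' : ℤ) = -(lam i') := by ring
      have hb : (-(c' : ℤ) - lam i') + lam i' = -(c' : ℤ) := by ring
      rw [ha, hb] at h4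
      exact h4.symm
    rw [hcount b, ← hc, ← hc']
    calc q ^ ((c : ℤ)) * q ^ (-(c' : ℤ)) * f b
        = q ^ (-(c' : ℤ)) * (q ^ ((c : ℤ)) * f b) := by ring
      _ = q ^ (-(c' : ℤ)) * (q ^ (lam i) * f b) := by rw [e1]
      _ = q ^ (lam i) * (q ^ (-(c' : ℤ)) * f b) := by ring
      _ = q ^ (lam i) * (q ^ (-(lam i')) * f b) := by rw [e3]
      _ = q ^ (lam i - lam i') * f b := by
          rw [← mul_assoc, ← zpow_add₀ hq]
          ring_nf
  -- trichotomy splitting of the product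
  have hsplit : ∀ (b : Fin r → Fin n) (j : Fin r),
      (∏ l, κ (b l)) = (∏ l, if l < j then κ (b l) else 1) * κ (b j) *
        (∏ l, if j < l then κ (b l) else 1) := by
    intro b j
    have hmid : κ (b j) = ∏ l, if l = j then κ (b l) else 1 := by
      rw [Finset.prod_ite_eq' Finset.univ j (fun l => κ (b l))]
      simp
    rw [hmid, ← Finset.prod_mul_distrib, ← Finset.prod_mul_distrib]
    apply Finset.prod_congr rfl
    intro l _
    rcases lt_trichotomy l j with h | h | h
    · simp [h, h.ne, lt_asymm h]
    · simp [h, lt_irrefl]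
    · simp [h, h.ne', lt_asymm h]
  -- the two tail products cancel
  have htail : ∀ (b : Fin r → Fin n) (j : Fin r),
      (∏ l, if j < l then κ (b l) else 1) * (∏ l, if j < l then κ' (b l) else 1) = 1 := by
    intro b j
    rw [← Finset.prod_mul_distrib]
    apply Finset.prod_eq_one
    intro l _
    by_cases h : j < l
    · simp [h, hκκ' (b l)]
    · simp [h]
  -- the key pointwise identity
  have point : ∀ (b : Fin r → Fin n) (j : Fin r), b j = i' → ∀ x : k,
      (∏ l, if l < j then κ (b l) else 1) * (f b * x)
        = q ^ (lam i - lam i' + 1) *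
          ((∏ l, if j < l then κ' (b l) else 1) * (f b * x)) := by
    intro b j hbj x
    set A := ∏ l, if l < j then κ (b l) else 1 with hA
    set Bκ := ∏ l, if j < l then κ (b l) else 1 with hBκ
    set B := ∏ l, if j < l then κ' (b l) else 1 with hB
    have h1 : A * q⁻¹ * Bκ = ∏ l, κ (b l) := by
      rw [hsplit b j, hbj, hκi']
    have h2 : (∏ l, κ (b l)) * f b = q ^ (lam i - lam i') * f b := key b
    have h3 : Bκ * B = 1 := htail b j
    have hq1 : q * q⁻¹ = 1 := mul_inv_cancel₀ hq
    have hBκ0 : Bκ ≠ 0 := left_ne_zero_of_mul_eq_one h3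
    have hc0 : q⁻¹ * Bκ ≠ 0 := mul_ne_zero (inv_ne_zero hq) hBκ0
    apply mul_right_cancel₀ hc0
    rw [show q ^ (lam i - lam i' + 1) = q ^ (lam i - lam i') * q by
      rw [← zpow_add_one₀ hq]]
    linear_combination (f b * x) * h1 + x * h2 -
      (q ^ (lam i - lam i') * q * q⁻¹ * f b * x) * h3 -
      (q ^ (lam i - lam i') * f b * x) * hq1
  -- now the main computation
  show (∑ a : Fin r → Fin n,
      (∑ j : Fin r, if a j = i then
        (∏ l : Fin r, if l < j then κ (a l) else 1) * f (Function.update a j i') else 0) * g a)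
    = q ^ (lam i - lam i' + 1) * ∑ a : Fin r → Fin n, f a *
      (∑ j : Fin r, if a j = i' then
        (∏ l : Fin r, if j < l then κ' (a l) else 1) * g (Function.update a j i) else 0)
  rw [Finset.mul_sum]
  simp only [Finset.sum_mul, Finset.mul_sum]
  rw [Finset.sum_comm]
  rw [show (∑ a : Fin r → Fin n, ∑ j : Fin r, q ^ (lam i - lam i' + 1) *
      (f a * (if a j = i' then
        (∏ l : Fin r, if j < l then κ' (a l) else 1) * g (Function.update a j i) else 0)))
      = ∑ j : Fin r, ∑ a : Fin r → Fin n, q ^ (lam i - lam i' + 1) *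
      (f a * (if a j = i' then
        (∏ l : Fin r, if j < l then κ' (a l) else 1) * g (Function.update a j i) else 0))
    from Finset.sum_comm]
  apply Finset.sum_congr rfl
  intro j _
  -- reindex by the involution flipping coordinate j between i and i'
  set σ : (Fin r → Fin n) → (Fin r → Fin n) :=
    fun a => Function.update a j (Equiv.swap i i' (a j)) with hσ
  have hσinv : Function.Involutive σ := by
    intro a
    funext l
    by_cases h : l = j
    · subst h
      simp [σ, Function.update_self]
    · simp [σ, Function.update_of_ne h]
  apply Fintype.sum_bijective σ hσinv.bijective
  intro a
  by_cases hja : a j = i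
  · have hσa : σ a = Function.update a j i' := by
      simp [σ, hja]
    have hσj : σ a j = i' := by
      rw [hσa, Function.update_self]
    rw [if_pos hja, hσa, if_pos (show Function.update a j i' j = i' from Function.update_self ..)]
    have hupd : Function.update (Function.update a j i') j i = a := by
      funext l
      by_cases h : l = j
      · subst h; simp [hja]
      · simp [Function.update_of_ne h]
    rw [hupd]
    have hprodQ : (∏ l, if j < l then κ' (Function.update a j i' l) else 1)
        = ∏ l, if j < l then κ' (a l) else 1 := by
      apply Finset.prod_congr rfl
      intro l _
      by_cases h : j < l
      · rw [if_pos h, if_pos h, Function.update_of_ne h.ne']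
      · rw [if_neg h, if_neg h]
    have hprodP : (∏ l, if l < j then κ (a l) else 1)
        = ∏ l, if l < j then κ (Function.update a j i' l) else 1 := by
      apply Finset.prod_congr rfl
      intro l _
      by_cases h : l < j
      · rw [if_pos h, if_pos h, Function.update_of_ne h.ne]
      · rw [if_neg h, if_neg h]
    rw [hprodP]
    have hpt := point (Function.update a j i') j (Function.update_self ..) (g a)
    linear_combination hpt
  · have hσj : σ a j ≠ i' := by
      simp only [σ, Function.update_self]
      intro h
      apply hja
      have := congrArg (Equiv.swap i i') h
      rw [Equiv.swap_apply_self, Equiv.swap_apply_right] at this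
      exact this
    rw [if_neg hja, if_neg hσj]
    simp
end

section
/- In the free algebra on F_1, F_2 over a field containing a nonzero q which is not a root of unity, set Ψ_2 = (1/([d_2][d_1^+]))([1+d_1^+] F_1F_2 - [d_1^+] F_2F_1) where d_1^+ = a_2 and d_2 = a_1 + a_2 + 1 for given positive integers a_1, a_2. Then in any U_q(gl_3)-module, if b is a maximal vector (E_1 b = E_2 b = 0) of weight λ with λ_1 - λ_2 = a_1 and λ_2 - λ_3 = a_2, one has E_2 (Ψ_2 b) = 0 and E_1 (Ψ_2 b) = (1/[a_2]) F_2 b. -/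
/-- The balanced `q`-integer `[m] = (q^m - q^{-m})/(q - q⁻¹)`. -/
noncomputable def qint {k : Type*} [Field k] (q : k) (m : ℤ) : k :=
  (q ^ m - q ^ (-m)) / (q - q⁻¹)

lemma key_aux {k : Type*} [Field k] (q x y : k) (hq : q ≠ 0) (hx : x ≠ 0) (hy : y ≠ 0) :
    (q*x - (q*x)⁻¹)*(q*y - (q*y)⁻¹) - (x-x⁻¹)*(y-y⁻¹) = (q - q⁻¹)*(q*x*y - (q*x*y)⁻¹) := by
  field_simp
  ring

lemma qint_key {k : Type*} [Field k] (q : k) (hq : q ≠ 0) (a b : ℤ) :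
    qint q (1 + a) * qint q (1 + b) - qint q a * qint q b = qint q (a + b + 1) := by
  by_cases hd : q - q⁻¹ = 0
  · simp [qint, hd]
  have hx : q ^ a ≠ 0 := zpow_ne_zero _ hq
  have hy : q ^ b ≠ 0 := zpow_ne_zero _ hq
  have hdd : (q - q⁻¹) * (q - q⁻¹) ≠ 0 := mul_ne_zero hd hd
  simp only [qint, neg_add, zpow_add₀ hq, zpow_neg, zpow_one, mul_inv]
  rw [div_mul_div_comm, div_mul_div_comm, div_sub_div_same, div_eq_div_iff hdd hd]
  have := key_aux q (q ^ a) (q ^ b) hq hx hy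
  simp only [mul_inv] at this
  linear_combination (q - q⁻¹) * this

lemma sub_inv_ne {k : Type*} [Field k] (x : k) (hx : x ≠ 0) (h2 : x * x ≠ 1) :
    x - x⁻¹ ≠ 0 := by
  intro h
  apply h2
  have := sub_eq_zero.mp h
  field_simp at this
  linear_combination this

lemma qint_ne {k : Type*} [Field k] (q : k) (hq : q ≠ 0)
    (hroot : ∀ m : ℕ, 0 < m → q ^ m ≠ 1) (m : ℕ) (hm : 0 < m) :
    qint q (m : ℤ) ≠ 0 := by
  have hd : q - q⁻¹ ≠ 0 :=
    sub_inv_ne q hq (by rw [← pow_two]; exact hroot 2 (by norm_num))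
  have hnum : q ^ (m : ℤ) - q ^ (-(m : ℤ)) ≠ 0 := by
    rw [zpow_neg, zpow_natCast]
    exact sub_inv_ne _ (pow_ne_zero _ hq)
      (by rw [← pow_add]; exact hroot (m + m) (by omega))
  exact div_ne_zero hnum hd

/-- Set `Ψ₂ = (1/([d₂][d₁⁺]))([1+d₁⁺] F₁F₂ - [d₁⁺] F₂F₁)` with `d₁⁺ = a₂`,
`d₂ = a₁ + a₂ + 1`.  In any `U_q(gl₃)`-module (a module with operators
`E₁, E₂, F₁, F₂, K₁^{±1}, K₂^{±1}, K₃^{±1}` satisfying the standard relations; here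
`E j, F j` for `j : Fin 2` are `E_{j+1}, F_{j+1}` and `K i, K' i` for `i : Fin 3` are
`K_{i+1}, K_{i+1}⁻¹`), if `b` is a maximal vector (`E₁ b = E₂ b = 0`) of weight `λ`
with `λ₁ - λ₂ = a₁ > 0` and `λ₂ - λ₃ = a₂ > 0`, then `E₂(Ψ₂ b) = 0` and
`E₁(Ψ₂ b) = (1/[a₂]) F₂ b`. -/
theorem Psi2_maximal_vector_property {k M : Type*} [Field k] [AddCommGroup M]
    [Module k M] (q : k) (hq : q ≠ 0) (hroot : ∀ m : ℕ, 0 < m → q ^ m ≠ 1)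
    (E F : Fin 2 → M →ₗ[k] M) (K K' : Fin 3 → M →ₗ[k] M)
    (hKK' : ∀ (i : Fin 3) (m : M), K i (K' i m) = m ∧ K' i (K i m) = m)
    (hKcomm : ∀ (i j : Fin 3) (m : M), K i (K j m) = K j (K i m))
    (hKE : ∀ (i : Fin 3) (j : Fin 2) (m : M),
      K i (E j m) = q ^ ((if (i : ℕ) = (j : ℕ) then (1 : ℤ) else 0) -
        (if (i : ℕ) = (j : ℕ) + 1 then (1 : ℤ) else 0)) • E j (K i m))
    (hKF : ∀ (i : Fin 3) (j : Fin 2) (m : M),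
      K i (F j m) = q ^ (-((if (i : ℕ) = (j : ℕ) then (1 : ℤ) else 0) -
        (if (i : ℕ) = (j : ℕ) + 1 then (1 : ℤ) else 0))) • F j (K i m))
    (hEF : ∀ (i j : Fin 2) (m : M),
      E i (F j m) - F j (E i m) =
        if i = j then
          (q - q⁻¹)⁻¹ • (K i.castSucc (K' i.succ m) - K' i.castSucc (K i.succ m))
        else 0)
    (hSerreE : ∀ (i j : Fin 2) (m : M), i ≠ j →
      E i (E i (E j m)) - (q + q⁻¹) • E i (E j (E i m)) + E j (E i (E i m)) = 0)
    (hSerreF : ∀ (i j : Fin 2) (m : M), i ≠ j →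
      F i (F i (F j m)) - (q + q⁻¹) • F i (F j (F i m)) + F j (F i (F i m)) = 0)
    (lam : Fin 3 → ℤ) (b : M)
    (hwt : ∀ i : Fin 3, K i b = q ^ (lam i) • b)
    (hmax : ∀ j : Fin 2, E j b = 0)
    (a1 a2 : ℕ) (ha1 : 0 < a1) (ha2 : 0 < a2)
    (hl1 : lam 0 - lam 1 = (a1 : ℤ)) (hl2 : lam 1 - lam 2 = (a2 : ℤ)) :
    let Ψ2b : M := (qint q ((a1 : ℤ) + (a2 : ℤ) + 1) * qint q (a2 : ℤ))⁻¹ •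
      (qint q (1 + (a2 : ℤ)) • F 0 (F 1 b) - qint q (a2 : ℤ) • F 1 (F 0 b))
    E 1 Ψ2b = 0 ∧ E 0 Ψ2b = (qint q (a2 : ℤ))⁻¹ • F 1 b := by
  intro Ψ2b
  have hd : q - q⁻¹ ≠ 0 :=
    sub_inv_ne q hq (by rw [← pow_two]; exact hroot 2 (by norm_num))
  -- inverse Cartan action on b
  have hK'b : ∀ i : Fin 3, K' i b = q ^ (-(lam i)) • b := by
    intro i
    have h := (hKK' i b).2
    rw [hwt i, map_smul] at h
    calc K' i b = q ^ (-(lam i)) • (q ^ (lam i) • K' i b) := by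
          rw [smul_smul, ← zpow_add₀ hq, neg_add_cancel, zpow_zero, one_smul]
      _ = q ^ (-(lam i)) • b := by rw [h]
  -- commutation of K' with F
  have hK'F : ∀ (i : Fin 3) (j : Fin 2) (m : M),
      K' i (F j m) = q ^ ((if (i : ℕ) = (j : ℕ) then (1 : ℤ) else 0) -
        (if (i : ℕ) = (j : ℕ) + 1 then (1 : ℤ) else 0)) • F j (K' i m) := by
    intro i j m
    set e : ℤ := (if (i : ℕ) = (j : ℕ) then (1 : ℤ) else 0) -
        (if (i : ℕ) = (j : ℕ) + 1 then (1 : ℤ) else 0) with he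
    have h := hKF i j (K' i m)
    rw [(hKK' i m).1] at h
    have h2 := congrArg (K' i) h
    rw [(hKK' i _).2, map_smul] at h2
    rw [h2, smul_smul, ← zpow_add₀ hq]
    rw [show e + -((if (i : ℕ) = (j : ℕ) then (1 : ℤ) else 0) -
        (if (i : ℕ) = (j : ℕ) + 1 then (1 : ℤ) else 0)) = 0 by rw [he]; ring,
      zpow_zero, one_smul]
  -- basic EF computations on b
  have e11 : E 1 (F 1 b) = qint q (a2 : ℤ) • b := by
    have h := hEF 1 1 b
    rw [if_pos rfl, hmax 1, map_zero, sub_zero] at h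
    have hc : (1 : Fin 2).castSucc = (1 : Fin 3) := rfl
    have hs : (1 : Fin 2).succ = (2 : Fin 3) := rfl
    rw [hc, hs, hK'b 2, map_smul, hwt 1, hwt 2, map_smul, hK'b 1, smul_smul, smul_smul,
      ← zpow_add₀ hq, ← zpow_add₀ hq] at h
    have h1 : -lam 2 + lam 1 = (a2 : ℤ) := by omega
    have h2 : lam 2 + -lam 1 = -(a2 : ℤ) := by omega
    rw [h1, h2] at h
    rw [h, ← sub_smul, smul_smul, qint]
    ring_nf
  have e00 : E 0 (F 0 b) = qint q (a1 : ℤ) • b := by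
    have h := hEF 0 0 b
    rw [if_pos rfl, hmax 0, map_zero, sub_zero] at h
    have hc : (0 : Fin 2).castSucc = (0 : Fin 3) := rfl
    have hs : (0 : Fin 2).succ = (1 : Fin 3) := rfl
    rw [hc, hs, hK'b 1, map_smul, hwt 0, hwt 1, map_smul, hK'b 0, smul_smul, smul_smul,
      ← zpow_add₀ hq, ← zpow_add₀ hq] at h
    have h1 : -lam 1 + lam 0 = (a1 : ℤ) := by omega
    have h2 : lam 1 + -lam 0 = -(a1 : ℤ) := by omega
    rw [h1, h2] at h
    rw [h, ← sub_smul, smul_smul, qint]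
    ring_nf
  have e10 : E 1 (F 0 b) = 0 := by
    have h := hEF 1 0 b
    rw [if_neg (by decide), sub_eq_zero] at h
    rw [h, hmax 1, map_zero]
  have e01 : E 0 (F 1 b) = 0 := by
    have h := hEF 0 1 b
    rw [if_neg (by decide), sub_eq_zero] at h
    rw [h, hmax 0, map_zero]
  -- second level computations
  have e1_01 : E 1 (F 0 (F 1 b)) = qint q (a2 : ℤ) • F 0 b := by
    have h := hEF 1 0 (F 1 b)
    rw [if_neg (by decide), sub_eq_zero] at h
    rw [h, e11, map_smul]
  have e0_10 : E 0 (F 1 (F 0 b)) = qint q (a1 : ℤ) • F 1 b := by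
    have h := hEF 0 1 (F 0 b)
    rw [if_neg (by decide), sub_eq_zero] at h
    rw [h, e00, map_smul]
  have e1_10 : E 1 (F 1 (F 0 b)) = qint q (1 + (a2 : ℤ)) • F 0 b := by
    have h := hEF 1 1 (F 0 b)
    rw [if_pos rfl] at h
    have hc : (1 : Fin 2).castSucc = (1 : Fin 3) := rfl
    have hs : (1 : Fin 2).succ = (2 : Fin 3) := rfl
    rw [hc, hs, e10, map_zero, sub_zero] at h
    have hA : K 1 (K' 2 (F 0 b)) = q ^ (1 + (lam 1 - lam 2)) • F 0 b := by
      rw [hK'F 2 0 b]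
      norm_num
      rw [hK'b 2, map_smul, map_smul, hKF 1 0 b]
      norm_num
      rw [hwt 1, map_smul, smul_smul, smul_smul]
      congr 1
      simp only [zpow_add₀ hq, zpow_sub₀ hq, zpow_neg, zpow_one, div_eq_mul_inv, mul_inv]
      ring
    have hB : K' 1 (K 2 (F 0 b)) = q ^ (-(1 + (lam 1 - lam 2))) • F 0 b := by
      rw [hKF 2 0 b]
      norm_num
      rw [hwt 2, map_smul, map_smul, hK'F 1 0 b]
      norm_num
      rw [hK'b 1, map_smul, smul_smul, smul_smul]
      congr 1
      simp only [zpow_add₀ hq, zpow_sub₀ hq, zpow_neg, zpow_one, div_eq_mul_inv, mul_inv]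
      ring
    rw [hA, hB, hl2] at h
    rw [h, ← sub_smul, smul_smul, qint]
    ring_nf
  have e0_01 : E 0 (F 0 (F 1 b)) = qint q (1 + (a1 : ℤ)) • F 1 b := by
    have h := hEF 0 0 (F 1 b)
    rw [if_pos rfl] at h
    have hc : (0 : Fin 2).castSucc = (0 : Fin 3) := rfl
    have hs : (0 : Fin 2).succ = (1 : Fin 3) := rfl
    rw [hc, hs, e01, map_zero, sub_zero] at h
    have hA : K 0 (K' 1 (F 1 b)) = q ^ (1 + (lam 0 - lam 1)) • F 1 b := by
      rw [hK'F 1 1 b]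
      norm_num
      rw [hK'b 1, map_smul, map_smul, hKF 0 1 b]
      norm_num
      rw [hwt 0, map_smul, smul_smul, smul_smul]
      congr 1
      simp only [zpow_add₀ hq, zpow_sub₀ hq, zpow_neg, zpow_one, div_eq_mul_inv, mul_inv]
      ring
    have hB : K' 0 (K 1 (F 1 b)) = q ^ (-(1 + (lam 0 - lam 1))) • F 1 b := by
      rw [hKF 1 1 b]
      norm_num
      rw [hwt 1, map_smul, map_smul, hK'F 0 1 b]
      norm_num
      rw [hK'b 0, map_smul, smul_smul, smul_smul]
      congr 1
      simp only [zpow_add₀ hq, zpow_sub₀ hq, zpow_neg, zpow_one, div_eq_mul_inv, mul_inv]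
      ring
    rw [hA, hB, hl1] at h
    rw [h, ← sub_smul, smul_smul, qint]
    ring_nf
  -- nonvanishing
  have hB2 : qint q (a2 : ℤ) ≠ 0 := qint_ne q hq hroot a2 ha2
  have hC : qint q ((a1 : ℤ) + (a2 : ℤ) + 1) ≠ 0 := by
    have := qint_ne q hq hroot (a1 + a2 + 1) (by omega)
    rwa [show (((a1 + a2 + 1 : ℕ)) : ℤ) = (a1 : ℤ) + (a2 : ℤ) + 1 by push_cast; ring] at this
  constructor
  · show E 1 ((qint q ((a1 : ℤ) + (a2 : ℤ) + 1) * qint q (a2 : ℤ))⁻¹ •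
      (qint q (1 + (a2 : ℤ)) • F 0 (F 1 b) - qint q (a2 : ℤ) • F 1 (F 0 b))) = 0
    rw [map_smul, map_sub, map_smul, map_smul, e1_01, e1_10, smul_smul, smul_smul,
      mul_comm (qint q (1 + (a2 : ℤ))) (qint q (a2 : ℤ)), sub_self, smul_zero]
  · show E 0 ((qint q ((a1 : ℤ) + (a2 : ℤ) + 1) * qint q (a2 : ℤ))⁻¹ •
      (qint q (1 + (a2 : ℤ)) • F 0 (F 1 b) - qint q (a2 : ℤ) • F 1 (F 0 b))) =
      (qint q (a2 : ℤ))⁻¹ • F 1 b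
    rw [map_smul, map_sub, map_smul, map_smul, e0_01, e0_10, smul_smul, smul_smul,
      ← sub_smul, smul_smul]
    have hkey := qint_key q hq (a2 : ℤ) (a1 : ℤ)
    rw [show (a2 : ℤ) + (a1 : ℤ) + 1 = (a1 : ℤ) + (a2 : ℤ) + 1 by ring] at hkey
    rw [hkey]
    congr 1
    field_simp
end
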